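/- arXiv:2511.23474 — 10 statements merged into one kernel-verified Lean document; each statement's English description precedes it below -/
import Mathlib

section
/- Let Ψ(s) = a·s^p + b·s^q with a, b > 0, p ∈ (0,1), q > 1, and let σ(s) = Σ_{i=1}^n c_i·s^{r_i} with n ≥ 1, c_i > 0 for all i, and 1 ≤ r_1 < r_2 < … < r_n. Then there exists a function Ψ̃ of class K₁^FxT such that Ψ̃(σ(s)) ≤ Ψ(s)·σ'(s) for all s > 0, where σ'(s) = Σ_{i=1}^n r_i·c_i·s^{r_i − 1} is the derivative of σ. -/
set_option maxHeartbeats 1000000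


/-- A function `Ψ : [0,∞) → [0,∞)` is of class `K₁^FxT` if there are constants
`a, b > 0`, `p ∈ (0,1)`, `q > 1` with `Ψ(s) = a s^p + b s^q` for all `s ≥ 0`. -/
def IsK1FxT (Ψ : ℝ → ℝ) : Prop :=
  ∃ a b p q : ℝ, 0 < a ∧ 0 < b ∧ 0 < p ∧ p < 1 ∧ 1 < q ∧
    ∀ s : ℝ, 0 ≤ s → Ψ s = a * s ^ p + b * s ^ q

/-- **Lemma 3.** Let `Ψ(s) = a s^p + b s^q` with `a, b > 0`, `p ∈ (0,1)`, `q > 1`,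
and `σ(s) = Σ_{i=1}^n c_i s^{r_i}` with `n ≥ 1`, `c_i > 0`, `1 ≤ r_1 < … < r_n`.
Then there is a class-`K₁^FxT` function `Ψ̃` with `Ψ̃(σ(s)) ≤ Ψ(s) σ'(s)` for all
`s > 0`, where `σ'(s) = Σ_i r_i c_i s^{r_i−1}`. -/
theorem stmt_2 (a b p q : ℝ) (ha : 0 < a) (hb : 0 < b)
    (hp : 0 < p ∧ p < 1) (hq : 1 < q)
    (n : ℕ) (hn : 1 ≤ n) (c r : Fin n → ℝ)
    (hc : ∀ i, 0 < c i) (hr1 : ∀ i, 1 ≤ r i) (hrmono : StrictMono r) :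
    ∃ Ψ' : ℝ → ℝ, IsK1FxT Ψ' ∧
      ∀ s : ℝ, 0 < s →
        Ψ' (∑ i, c i * s ^ r i) ≤
          (a * s ^ p + b * s ^ q) * ∑ i, r i * c i * s ^ (r i - 1) := by
  obtain ⟨hp0, hp1⟩ := hp
  set i0 : Fin n := ⟨0, by omega⟩ with hi0
  set iN : Fin n := ⟨n - 1, by omega⟩ with hiN
  have hle0 : ∀ i, r i0 ≤ r i := fun i => hrmono.monotone (by simp [Fin.le_def, hi0])
  have hleN : ∀ i, r i ≤ r iN := fun i =>
    hrmono.monotone (by simp [Fin.le_def, hiN]; omega)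
  set r1 := r i0 with hr1d
  set rn := r iN with hrnd
  have hr1pos : (0:ℝ) < r1 := lt_of_lt_of_le one_pos (hr1 i0)
  have hrnpos : (0:ℝ) < rn := lt_of_lt_of_le one_pos (hr1 iN)
  set C := ∑ i, c i with hCd
  have hC : 0 < C := Finset.sum_pos (fun i _ => hc i) ⟨i0, Finset.mem_univ _⟩
  set pt := (p + r1 - 1) / r1 with hptd
  set qt := (q + rn - 1) / rn with hqtd
  have hr1_1 : (1:ℝ) ≤ r1 := hr1 i0
  have hrn_1 : (1:ℝ) ≤ rn := hr1 iN
  have hptpos : 0 < pt := div_pos (by linarith) hr1pos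
  have hpt1 : pt < 1 := (div_lt_one hr1pos).2 (by linarith)
  have hqt1 : 1 < qt := (one_lt_div hrnpos).2 (by linarith)
  have hr1pt : r1 * pt = p + r1 - 1 := by rw [hptd]; field_simp
  have hrnqt : rn * qt = q + rn - 1 := by rw [hqtd]; field_simp
  set M := min (a * r1 * c i0) (b * rn * c iN) with hMd
  have hM : 0 < M := lt_min (mul_pos (mul_pos ha hr1pos) (hc i0)) (mul_pos (mul_pos hb hrnpos) (hc iN))
  have hCpt : (0:ℝ) < C ^ pt := Real.rpow_pos_of_pos hC _
  have hCqt : (0:ℝ) < C ^ qt := Real.rpow_pos_of_pos hC _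
  set A := M / (2 * C ^ pt) with hAd
  set B := M / (2 * C ^ qt) with hBd
  have hA : 0 < A := by positivity
  have hB : 0 < B := by positivity
  refine ⟨fun t => A * t ^ pt + B * t ^ qt,
    ⟨A, B, pt, qt, hA, hB, hptpos, hpt1, hqt1, fun s _ => rfl⟩, ?_⟩
  intro s hs
  set σ := ∑ i, c i * s ^ r i with hσd
  have hσpos : 0 < σ := Finset.sum_pos
    (fun i _ => mul_pos (hc i) (Real.rpow_pos_of_pos hs _)) ⟨i0, Finset.mem_univ _⟩
  -- RHS lower bounds
  have hsum_nonneg : ∀ i ∈ Finset.univ, 0 ≤ r i * c i * s ^ (r i - 1) := fun i _ =>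
    mul_nonneg (mul_nonneg (by linarith [hr1 i]) (hc i).le)
      (Real.rpow_pos_of_pos hs _).le
  have hterm1 : r1 * c i0 * s ^ (r1 - 1) ≤ ∑ i, r i * c i * s ^ (r i - 1) :=
    Finset.single_le_sum hsum_nonneg (Finset.mem_univ i0)
  have htermN : rn * c iN * s ^ (rn - 1) ≤ ∑ i, r i * c i * s ^ (r i - 1) :=
    Finset.single_le_sum hsum_nonneg (Finset.mem_univ iN)
  have hsum_nn : 0 ≤ ∑ i, r i * c i * s ^ (r i - 1) := Finset.sum_nonneg hsum_nonneg
  have hRHS1 : a * r1 * c i0 * s ^ (p + r1 - 1) ≤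
      (a * s ^ p + b * s ^ q) * ∑ i, r i * c i * s ^ (r i - 1) := by
    have h1 : a * r1 * c i0 * s ^ (p + r1 - 1)
        = (a * s ^ p) * (r1 * c i0 * s ^ (r1 - 1)) := by
      rw [show p + r1 - 1 = p + (r1 - 1) by ring, Real.rpow_add hs]; ring
    rw [h1]
    apply mul_le_mul (le_add_of_nonneg_right (by positivity))
      hterm1 (mul_nonneg (mul_nonneg hr1pos.le (hc i0).le) (Real.rpow_pos_of_pos hs _).le)
      (by positivity)
  have hRHSN : b * rn * c iN * s ^ (q + rn - 1) ≤
      (a * s ^ p + b * s ^ q) * ∑ i, r i * c i * s ^ (r i - 1) := by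
    have h1 : b * rn * c iN * s ^ (q + rn - 1)
        = (b * s ^ q) * (rn * c iN * s ^ (rn - 1)) := by
      rw [show q + rn - 1 = q + (rn - 1) by ring, Real.rpow_add hs]; ring
    rw [h1]
    apply mul_le_mul (le_add_of_nonneg_left (by positivity))
      htermN (mul_nonneg (mul_nonneg hrnpos.le (hc iN).le) (Real.rpow_pos_of_pos hs _).le)
      (by positivity)
  have hACpt : A * C ^ pt = M / 2 := by
    rw [hAd, div_mul_eq_mul_div, mul_div_mul_right _ _ hCpt.ne']
  have hBCqt : B * C ^ qt = M / 2 := by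
    rw [hBd, div_mul_eq_mul_div, mul_div_mul_right _ _ hCqt.ne']
  rcases le_total s 1 with hs1 | hs1
  · -- small s case
    have hσle : σ ≤ C * s ^ r1 := by
      calc σ ≤ ∑ i, c i * s ^ r1 := Finset.sum_le_sum (fun i _ =>
            mul_le_mul_of_nonneg_left
              (Real.rpow_le_rpow_of_exponent_ge hs hs1 (hle0 i)) (hc i).le)
        _ = C * s ^ r1 := (Finset.sum_mul ..).symm
    have hσpt : σ ^ pt ≤ C ^ pt * s ^ (p + r1 - 1) := by
      calc σ ^ pt ≤ (C * s ^ r1) ^ pt :=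
            Real.rpow_le_rpow hσpos.le hσle hptpos.le
        _ = C ^ pt * s ^ (r1 * pt) := by
            rw [Real.mul_rpow hC.le (Real.rpow_pos_of_pos hs _).le,
              ← Real.rpow_mul hs.le]
        _ = C ^ pt * s ^ (p + r1 - 1) := by rw [hr1pt]
    have hσqt : σ ^ qt ≤ C ^ qt * s ^ (p + r1 - 1) := by
      calc σ ^ qt ≤ (C * s ^ r1) ^ qt :=
            Real.rpow_le_rpow hσpos.le hσle (by linarith)
        _ = C ^ qt * s ^ (r1 * qt) := by
            rw [Real.mul_rpow hC.le (Real.rpow_pos_of_pos hs _).le,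
              ← Real.rpow_mul hs.le]
        _ ≤ C ^ qt * s ^ (p + r1 - 1) := by
            refine mul_le_mul_of_nonneg_left
              (Real.rpow_le_rpow_of_exponent_ge hs hs1 ?_) hCqt.le
            have h := le_mul_of_one_le_right hr1pos.le hqt1.le
            linarith
    show A * σ ^ pt + B * σ ^ qt ≤ _
    calc A * σ ^ pt + B * σ ^ qt
        ≤ A * (C ^ pt * s ^ (p + r1 - 1)) + B * (C ^ qt * s ^ (p + r1 - 1)) :=
          add_le_add (mul_le_mul_of_nonneg_left hσpt hA.le)
            (mul_le_mul_of_nonneg_left hσqt hB.le)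
      _ = M * s ^ (p + r1 - 1) := by
          rw [← mul_assoc, ← mul_assoc, hACpt, hBCqt]; ring
      _ ≤ a * r1 * c i0 * s ^ (p + r1 - 1) :=
          mul_le_mul_of_nonneg_right (min_le_left _ _)
            (Real.rpow_pos_of_pos hs _).le
      _ ≤ _ := hRHS1
  · -- large s case
    have hσle : σ ≤ C * s ^ rn := by
      calc σ ≤ ∑ i, c i * s ^ rn := Finset.sum_le_sum (fun i _ =>
            mul_le_mul_of_nonneg_left
              (Real.rpow_le_rpow_of_exponent_le hs1 (hleN i)) (hc i).le)
        _ = C * s ^ rn := (Finset.sum_mul ..).symm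
    have hσqt : σ ^ qt ≤ C ^ qt * s ^ (q + rn - 1) := by
      calc σ ^ qt ≤ (C * s ^ rn) ^ qt :=
            Real.rpow_le_rpow hσpos.le hσle (by linarith)
        _ = C ^ qt * s ^ (rn * qt) := by
            rw [Real.mul_rpow hC.le (Real.rpow_pos_of_pos hs _).le,
              ← Real.rpow_mul hs.le]
        _ = C ^ qt * s ^ (q + rn - 1) := by rw [hrnqt]
    have hσpt : σ ^ pt ≤ C ^ pt * s ^ (q + rn - 1) := by
      calc σ ^ pt ≤ (C * s ^ rn) ^ pt :=
            Real.rpow_le_rpow hσpos.le hσle hptpos.le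
        _ = C ^ pt * s ^ (rn * pt) := by
            rw [Real.mul_rpow hC.le (Real.rpow_pos_of_pos hs _).le,
              ← Real.rpow_mul hs.le]
        _ ≤ C ^ pt * s ^ (q + rn - 1) := by
            refine mul_le_mul_of_nonneg_left
              (Real.rpow_le_rpow_of_exponent_le hs1 ?_) hCpt.le
            have h := mul_le_of_le_one_right hrnpos.le hpt1.le
            linarith
    show A * σ ^ pt + B * σ ^ qt ≤ _
    calc A * σ ^ pt + B * σ ^ qt
        ≤ A * (C ^ pt * s ^ (q + rn - 1)) + B * (C ^ qt * s ^ (q + rn - 1)) :=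
          add_le_add (mul_le_mul_of_nonneg_left hσpt hA.le)
            (mul_le_mul_of_nonneg_left hσqt hB.le)
      _ = M * s ^ (q + rn - 1) := by
          rw [← mul_assoc, ← mul_assoc, hACpt, hBCqt]; ring
      _ ≤ b * rn * c iN * s ^ (q + rn - 1) :=
          mul_le_mul_of_nonneg_right (min_le_right _ _)
            (Real.rpow_pos_of_pos hs _).le
      _ ≤ _ := hRHSN
end

section
/- Let g(s) = Σ_{i=1}^n c_i·s^{r_i} with n ≥ 1, c_i > 0 for all i, and 0 < r_1 < r_2 < … < r_n, and let γ : [0,∞) → [0,∞) be the inverse of g, i.e., the continuous strictly increasing bijection of [0,∞) satisfying γ(g(s)) = s for all s ≥ 0. Let Ψ(s) = a·s^p + b·s^q with a, b > 0, p ∈ (0,1), q > 1. Then there exist a constant λ ≥ 1 and a function Ψ̃ of class K₁^FxT such that for all s > 0, λ·γ(s)^{λ−1}·γ'(s)·Ψ(s) ≥ Ψ̃(γ(s)^λ), where γ'(s) = 1 / g'(γ(s)) = 1 / (Σ_{i=1}^n r_i·c_i·γ(s)^{r_i−1}) is the derivative of γ at s > 0 (given by the inverse function theorem). Moreover, any λ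 > (1 − p)·r_n works. -/
set_option maxHeartbeats 1000000


/-- **Lemma 4.** Let `g(s) = Σ_{i=1}^n c_i s^{r_i}` (`n ≥ 1`, `c_i > 0`,
`0 < r_1 < … < r_n`) and let `γ : [0,∞) → [0,∞)` be the inverse of `g`, i.e. the
continuous strictly increasing bijection of `[0,∞)` with `γ(g(s)) = s` for `s ≥ 0`.
Let `Ψ(s) = a s^p + b s^q` with `a, b > 0`, `p ∈ (0,1)`, `q > 1`. Then there are
`λ ≥ 1` and a class-`K₁^FxT` function `Ψ̃` such that for all `s > 0`,
`λ γ(s)^{λ−1} γ'(s) Ψ(s) ≥ Ψ̃(γ(s)^λ)`, where `γ'(s) = 1/(Σ_i r_i c_i γ(s)^{r_i−1})`.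
Moreover, any `λ ≥ 1` with `λ > (1−p) r_n` works. -/
theorem stmt_3 (n : ℕ) (hn : 1 ≤ n) (c r : Fin n → ℝ)
    (hc : ∀ i, 0 < c i) (hr0 : ∀ i, 0 < r i) (hrmono : StrictMono r)
    (γ : ℝ → ℝ)
    (hγcont : ContinuousOn γ (Set.Ici 0))
    (hγmono : StrictMonoOn γ (Set.Ici 0))
    (hγbij : Set.BijOn γ (Set.Ici 0) (Set.Ici 0))
    (hγinv : ∀ s : ℝ, 0 ≤ s → γ (∑ i, c i * s ^ r i) = s)
    (a b p q : ℝ) (ha : 0 < a) (hb : 0 < b) (hp : 0 < p ∧ p < 1) (hq : 1 < q) :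
    (∃ lam : ℝ, 1 ≤ lam ∧ ∃ Ψ' : ℝ → ℝ, IsK1FxT Ψ' ∧
      ∀ s : ℝ, 0 < s →
        Ψ' (γ s ^ lam) ≤
          lam * γ s ^ (lam - 1) * (1 / ∑ i, r i * c i * γ s ^ (r i - 1)) *
            (a * s ^ p + b * s ^ q)) ∧
    ∀ lam : ℝ, 1 ≤ lam → (1 - p) * r ⟨n - 1, by omega⟩ < lam →
      ∃ Ψ' : ℝ → ℝ, IsK1FxT Ψ' ∧
        ∀ s : ℝ, 0 < s →
          Ψ' (γ s ^ lam) ≤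
            lam * γ s ^ (lam - 1) * (1 / ∑ i, r i * c i * γ s ^ (r i - 1)) *
              (a * s ^ p + b * s ^ q) := by
  classical
  obtain ⟨hp0, hp1⟩ := hp
  have hne : Nonempty (Fin n) := ⟨⟨0, by omega⟩⟩
  set m : Fin n := ⟨n - 1, by omega⟩ with hm
  set z : Fin n := ⟨0, by omega⟩ with hz
  have hrm : 0 < r m := hr0 m
  have hrz : 0 < r z := hr0 z
  have hle_m : ∀ i : Fin n, r i ≤ r m := fun i => by
    apply hrmono.monotone
    rw [Fin.le_def]
    have := i.isLt
    simp only [hm]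
    omega
  have hz_le : ∀ i : Fin n, r z ≤ r i := fun i => by
    apply hrmono.monotone
    rw [Fin.le_def]
    simp [hz]
  -- γ(0) = 0
  have hγ0 : γ 0 = 0 := by
    have h := hγinv 0 le_rfl
    have hsum : (∑ i, c i * (0:ℝ) ^ r i) = 0 :=
      Finset.sum_eq_zero fun i _ => by rw [Real.zero_rpow (hr0 i).ne', mul_zero]
    rwa [hsum] at h
  have key : ∀ lam : ℝ, 1 ≤ lam → (1 - p) * r m < lam →
      ∃ Ψ' : ℝ → ℝ, IsK1FxT Ψ' ∧
        ∀ s : ℝ, 0 < s →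
          Ψ' (γ s ^ lam) ≤
            lam * γ s ^ (lam - 1) * (1 / ∑ i, r i * c i * γ s ^ (r i - 1)) *
              (a * s ^ p + b * s ^ q) := by
    intro lam hlam1 hlamr
    have hlam0 : (0:ℝ) < lam := lt_of_lt_of_le one_pos hlam1
    have hpm : (1 - p) * r z < lam :=
      lt_of_le_of_lt (mul_le_mul_of_nonneg_left (hz_le m) (by linarith only [hp1])) hlamr
    set p' : ℝ := (lam - (1 - p) * r z) / lam with hp'
    set q' : ℝ := (lam + (q - 1) * r m) / lam with hq'
    set qz : ℝ := (lam + (q - 1) * r z) / lam with hqz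
    have hp'0 : 0 < p' := div_pos (by linarith only [hpm]) hlam0
    have hp'1 : p' < 1 := (div_lt_one hlam0).mpr
      (sub_lt_self lam (mul_pos (by linarith only [hp1]) hrz))
    have hq'1 : 1 < q' := (one_lt_div hlam0).mpr
      (lt_add_of_pos_right lam (mul_pos (by linarith only [hq]) hrm))
    have hqzq' : qz ≤ q' := by
      rw [hqz, hq']
      exact (div_le_div_iff_of_pos_right hlam0).mpr
        (add_le_add_right (mul_le_mul_of_nonneg_left (hz_le m) (by linarith only [hq])) lam)
    set C : ℝ := ∑ i, c i with hC
    have hC0 : 0 < C := Finset.sum_pos (fun i _ => hc i) Finset.univ_nonempty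
    set K : ℝ := lam / r m with hK
    have hK0 : 0 < K := div_pos hlam0 hrm
    set A1 : ℝ := K * a * C ^ (p - 1) with hA1def
    set A2 : ℝ := K * b * (c m) ^ (q - 1) / 2 with hA2def
    set A3 : ℝ := K * b * (c z) ^ (q - 1) with hA3def
    have hA1 : 0 < A1 := by
      have := Real.rpow_pos_of_pos hC0 (p - 1); positivity
    have hA2 : 0 < A2 := by
      have := Real.rpow_pos_of_pos (hc m) (q - 1); positivity
    have hA3 : 0 < A3 := by
      have := Real.rpow_pos_of_pos (hc z) (q - 1); positivity
    set aA : ℝ := min A1 A2 with haA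
    set bB : ℝ := min A3 A2 with hbB
    refine ⟨fun u => aA * u ^ p' + bB * u ^ q',
      ⟨aA, bB, p', q', lt_min hA1 hA2, lt_min hA3 hA2, hp'0, hp'1, hq'1,
        fun s _ => rfl⟩, ?_⟩
    intro s hs
    have hx : 0 < γ s := by
      have h := hγmono (Set.self_mem_Ici) (Set.mem_Ici.mpr hs.le) hs
      rwa [hγ0] at h
    set x := γ s with hxdef
    have hgx : (∑ i, c i * x ^ r i) = s := by
      have h1 : γ (∑ i, c i * x ^ r i) = x := hγinv x hx.le
      have hsum0 : (0:ℝ) ≤ ∑ i, c i * x ^ r i :=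
        Finset.sum_nonneg fun i _ =>
          mul_nonneg (hc i).le (Real.rpow_nonneg hx.le _)
      exact hγmono.injOn (Set.mem_Ici.mpr hsum0) (Set.mem_Ici.mpr hs.le) h1
    set D : ℝ := ∑ i, r i * c i * x ^ (r i - 1) with hD
    have hD0 : 0 < D :=
      Finset.sum_pos (fun i _ =>
        mul_pos (mul_pos (hr0 i) (hc i)) (Real.rpow_pos_of_pos hx _))
        Finset.univ_nonempty
    have hDx : D * x ≤ r m * s := by
      have h1 : D * x = ∑ i, r i * (c i * x ^ r i) := by
        rw [hD, Finset.sum_mul]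
        refine Finset.sum_congr rfl fun i _ => ?_
        rw [Real.rpow_sub hx, Real.rpow_one]
        field_simp
      rw [h1, ← hgx, Finset.mul_sum]
      exact Finset.sum_le_sum fun i _ =>
        mul_le_mul_of_nonneg_right (hle_m i)
          (mul_nonneg (hc i).le (Real.rpow_nonneg hx.le _))
    have hmid : x / (r m * s) ≤ 1 / D := by
      rw [div_le_div_iff₀ (mul_pos hrm hs) hD0, one_mul, mul_comm]
      exact hDx
    have hΨ : 0 ≤ a * s ^ p + b * s ^ q :=
      add_nonneg (mul_nonneg ha.le (Real.rpow_nonneg hs.le _))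
        (mul_nonneg hb.le (Real.rpow_nonneg hs.le _))
    have hxl1 : 0 < x ^ (lam - 1) := Real.rpow_pos_of_pos hx _
    have hu0 : 0 < x ^ lam := Real.rpow_pos_of_pos hx _
    -- Claim A : the key lower bound on the right-hand side
    have hid : lam * x ^ (lam - 1) * (x / (r m * s)) * (a * s ^ p + b * s ^ q) =
        K * a * (x ^ lam * s ^ (p - 1)) + K * b * (x ^ lam * s ^ (q - 1)) := by
      rw [Real.rpow_sub hx lam 1, Real.rpow_sub hs p 1, Real.rpow_sub hs q 1,
        Real.rpow_one, Real.rpow_one, hK]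
      field_simp
    have hstep : lam * x ^ (lam - 1) * (x / (r m * s)) * (a * s ^ p + b * s ^ q) ≤
        lam * x ^ (lam - 1) * (1 / D) * (a * s ^ p + b * s ^ q) := by
      have h0 : 0 ≤ lam * x ^ (lam - 1) := mul_nonneg hlam0.le hxl1.le
      exact mul_le_mul_of_nonneg_right
        (mul_le_mul_of_nonneg_left hmid h0) hΨ
    have hA' : K * a * (x ^ lam * s ^ (p - 1)) + K * b * (x ^ lam * s ^ (q - 1)) ≤
        lam * x ^ (lam - 1) * (1 / D) * (a * s ^ p + b * s ^ q) := by
      rw [← hid]; exact hstep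
    -- exponent identities
    have hlp' : lam * p' = lam + r z * (p - 1) := by
      rw [hp']; field_simp; ring
    have hlq' : lam * q' = lam + r m * (q - 1) := by
      rw [hq']; field_simp
    have hlqz : lam * qz = lam + r z * (q - 1) := by
      rw [hqz]; field_simp
    have hEp : x ^ lam * x ^ (r z * (p - 1)) = (x ^ lam) ^ p' := by
      rw [← Real.rpow_add hx, ← Real.rpow_mul hx.le, hlp']
    have hEq : x ^ lam * x ^ (r m * (q - 1)) = (x ^ lam) ^ q' := by
      rw [← Real.rpow_add hx, ← Real.rpow_mul hx.le, hlq']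
    have hEqz : x ^ lam * x ^ (r z * (q - 1)) = (x ^ lam) ^ qz := by
      rw [← Real.rpow_add hx, ← Real.rpow_mul hx.le, hlqz]
    -- reduce to Claim B
    refine le_trans ?_ hA'
    rcases le_total x 1 with hx1 | hx1
    · -- x ≤ 1
      have hu1 : x ^ lam ≤ 1 := Real.rpow_le_one hx.le hx1 hlam0.le
      have hsle : s ≤ C * x ^ r z := by
        rw [← hgx, hC, Finset.sum_mul]
        exact Finset.sum_le_sum fun i _ =>
          mul_le_mul_of_nonneg_left
            (Real.rpow_le_rpow_of_exponent_ge hx hx1 (hz_le i)) (hc i).le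
      have hsge : c z * x ^ r z ≤ s := by
        rw [← hgx]
        exact Finset.single_le_sum
          (fun i _ => mul_nonneg (hc i).le (Real.rpow_nonneg hx.le _))
          (Finset.mem_univ z)
      -- p-term
      have hsp : C ^ (p - 1) * (x ^ lam) ^ p' ≤ x ^ lam * s ^ (p - 1) := by
        have h1 : (C * x ^ r z) ^ (p - 1) ≤ s ^ (p - 1) :=
          Real.rpow_le_rpow_of_nonpos hs hsle (by linarith only [hp1])
        have h2 : (C * x ^ r z) ^ (p - 1) = C ^ (p - 1) * x ^ (r z * (p - 1)) := by
          rw [Real.mul_rpow hC0.le (Real.rpow_nonneg hx.le _),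
            ← Real.rpow_mul hx.le]
        calc C ^ (p - 1) * (x ^ lam) ^ p'
            = x ^ lam * (C ^ (p - 1) * x ^ (r z * (p - 1))) := by
              rw [← hEp]; ring
          _ ≤ x ^ lam * s ^ (p - 1) := by
              apply mul_le_mul_of_nonneg_left _ hu0.le
              rw [← h2]; exact h1
      -- q-term
      have hsqz : (c z) ^ (q - 1) * (x ^ lam) ^ qz ≤ x ^ lam * s ^ (q - 1) := by
        have h1 : (c z * x ^ r z) ^ (q - 1) ≤ s ^ (q - 1) :=
          Real.rpow_le_rpow (mul_nonneg (hc z).le (Real.rpow_nonneg hx.le _)) hsge (by linarith only [hq])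
        have h2 : (c z * x ^ r z) ^ (q - 1)
            = (c z) ^ (q - 1) * x ^ (r z * (q - 1)) := by
          rw [Real.mul_rpow (hc z).le (Real.rpow_nonneg hx.le _),
            ← Real.rpow_mul hx.le]
        calc (c z) ^ (q - 1) * (x ^ lam) ^ qz
            = x ^ lam * ((c z) ^ (q - 1) * x ^ (r z * (q - 1))) := by
              rw [← hEqz]; ring
          _ ≤ x ^ lam * s ^ (q - 1) := by
              apply mul_le_mul_of_nonneg_left _ hu0.le
              rw [← h2]; exact h1
      have hqmon : (x ^ lam) ^ q' ≤ (x ^ lam) ^ qz :=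
        Real.rpow_le_rpow_of_exponent_ge hu0 hu1 hqzq'
      have e1 : aA * (x ^ lam) ^ p' ≤ K * a * (x ^ lam * s ^ (p - 1)) := by
        calc aA * (x ^ lam) ^ p' ≤ A1 * (x ^ lam) ^ p' :=
              mul_le_mul_of_nonneg_right (min_le_left _ _)
                (Real.rpow_nonneg hu0.le _)
          _ = K * a * (C ^ (p - 1) * (x ^ lam) ^ p') := by rw [hA1def]; ring
          _ ≤ K * a * (x ^ lam * s ^ (p - 1)) :=
              mul_le_mul_of_nonneg_left hsp (mul_nonneg hK0.le ha.le)
      have e2 : bB * (x ^ lam) ^ q' ≤ K * b * (x ^ lam * s ^ (q - 1)) := by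
        calc bB * (x ^ lam) ^ q' ≤ A3 * (x ^ lam) ^ qz := by
              apply mul_le_mul (min_le_left _ _) hqmon
                (Real.rpow_nonneg hu0.le _) hA3.le
          _ = K * b * ((c z) ^ (q - 1) * (x ^ lam) ^ qz) := by rw [hA3def]; ring
          _ ≤ K * b * (x ^ lam * s ^ (q - 1)) :=
              mul_le_mul_of_nonneg_left hsqz (mul_nonneg hK0.le hb.le)
      exact add_le_add e1 e2
    · -- 1 ≤ x
      have hu1 : 1 ≤ x ^ lam := Real.one_le_rpow hx1 hlam0.le
      have hsgm : c m * x ^ r m ≤ s := by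
        rw [← hgx]
        exact Finset.single_le_sum
          (fun i _ => mul_nonneg (hc i).le (Real.rpow_nonneg hx.le _))
          (Finset.mem_univ m)
      have hsq : (c m) ^ (q - 1) * (x ^ lam) ^ q' ≤ x ^ lam * s ^ (q - 1) := by
        have h1 : (c m * x ^ r m) ^ (q - 1) ≤ s ^ (q - 1) :=
          Real.rpow_le_rpow (mul_nonneg (hc m).le (Real.rpow_nonneg hx.le _)) hsgm (by linarith only [hq])
        have h2 : (c m * x ^ r m) ^ (q - 1)
            = (c m) ^ (q - 1) * x ^ (r m * (q - 1)) := by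
          rw [Real.mul_rpow (hc m).le (Real.rpow_nonneg hx.le _),
            ← Real.rpow_mul hx.le]
        calc (c m) ^ (q - 1) * (x ^ lam) ^ q'
            = x ^ lam * ((c m) ^ (q - 1) * x ^ (r m * (q - 1))) := by
              rw [← hEq]; ring
          _ ≤ x ^ lam * s ^ (q - 1) := by
              apply mul_le_mul_of_nonneg_left _ hu0.le
              rw [← h2]; exact h1
      have hup : (x ^ lam) ^ p' ≤ (x ^ lam) ^ q' :=
        Real.rpow_le_rpow_of_exponent_le hu1 (by linarith only [hp'1, hq'1])
      have huq0 : 0 ≤ (x ^ lam) ^ q' := Real.rpow_nonneg hu0.le _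
      have e3 : aA * (x ^ lam) ^ p' + bB * (x ^ lam) ^ q'
          ≤ K * b * (c m) ^ (q - 1) * (x ^ lam) ^ q' := by
        have t1 : aA * (x ^ lam) ^ p' ≤ A2 * (x ^ lam) ^ q' :=
          mul_le_mul (min_le_right _ _) hup (Real.rpow_nonneg hu0.le _) hA2.le
        have t2 : bB * (x ^ lam) ^ q' ≤ A2 * (x ^ lam) ^ q' :=
          mul_le_mul_of_nonneg_right (min_le_right _ _) huq0
        calc aA * (x ^ lam) ^ p' + bB * (x ^ lam) ^ q'
            ≤ A2 * (x ^ lam) ^ q' + A2 * (x ^ lam) ^ q' := add_le_add t1 t2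
          _ = K * b * (c m) ^ (q - 1) * (x ^ lam) ^ q' := by rw [hA2def]; ring
      have e4 : K * b * (c m) ^ (q - 1) * (x ^ lam) ^ q'
          ≤ K * b * (x ^ lam * s ^ (q - 1)) := by
        calc K * b * (c m) ^ (q - 1) * (x ^ lam) ^ q'
            = K * b * ((c m) ^ (q - 1) * (x ^ lam) ^ q') := by ring
          _ ≤ K * b * (x ^ lam * s ^ (q - 1)) :=
              mul_le_mul_of_nonneg_left hsq (mul_nonneg hK0.le hb.le)
      have e5 : 0 ≤ K * a * (x ^ lam * s ^ (p - 1)) :=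
        mul_nonneg (mul_nonneg hK0.le ha.le)
          (mul_nonneg hu0.le (Real.rpow_nonneg hs.le _))
      calc aA * (x ^ lam) ^ p' + bB * (x ^ lam) ^ q'
          ≤ K * b * (x ^ lam * s ^ (q - 1)) := e3.trans e4
        _ ≤ K * a * (x ^ lam * s ^ (p - 1)) + K * b * (x ^ lam * s ^ (q - 1)) := by
            linarith only [e5]
  refine ⟨⟨max 1 ((1 - p) * r m + 1), le_max_left _ _,
    key _ (le_max_left _ _) (lt_of_lt_of_le (lt_add_one _) (le_max_right _ _))⟩,
    fun lam h1 h2 => key lam h1 h2⟩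
end

section
/- Let f : ℝⁿ × ℝᵐ → ℝⁿ be continuous with f(0,0) = 0, and let V : ℝⁿ → [0,∞) be continuously differentiable. Assume there exist functions α̲, ᾱ of class K∞ with α̲(|x|) ≤ V(x) ≤ ᾱ(|x|) for all x ∈ ℝⁿ, a function χ of class K∞, and a function Ψ of class K₁^FxT such that for all x ∈ ℝⁿ and u ∈ ℝᵐ: V(x) ≥ χ(|u|) implies ⟨∇V(x), f(x,u)⟩ ≤ −Ψ(V(x)). Let σ(s) = Σ_{i=1}^n c_i·s^{r_i} with c_i > 0 and 1 ≤ r_1 < … < r_n. Then Ṽ := σ ∘ V is continuously differentiable, satisfies σ(α̲(|x|)) ≤ Ṽ(x) ≤ σ(ᾱ(|x|)) for all x with σ∘α̲ and σ∘ᾱ of class K∞, and there exists a function Ψ̃ of class K₁^FxT such that for all x ∈ ℝⁿ and u ∈ ℝᵐ: Ṽ(x) ≥ σ(χ(|u|)) implies ⟨∇Ṽ(x), f(x,u)⟩ ≤ −Ψ̃(Ṽ(x)). -/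
set_option maxHeartbeats 1000000


/-- A function `α : [0,∞) → [0,∞)` is of class `K∞`: continuous, strictly
increasing, `α(0) = 0`, and `α(s) → ∞` as `s → ∞`. -/
def IsKInfty (α : ℝ → ℝ) : Prop :=
  ContinuousOn α (Set.Ici 0) ∧ StrictMonoOn α (Set.Ici 0) ∧ α 0 = 0 ∧
    Filter.Tendsto α Filter.atTop Filter.atTop

lemma kinfty_nonneg {α : ℝ → ℝ} (hα : IsKInfty α) {s : ℝ} (hs : 0 ≤ s) : 0 ≤ α s := by
  rcases eq_or_lt_of_le hs with h | h
  · rw [← h, hα.2.2.1]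
  · have := hα.2.1 (Set.self_mem_Ici) (le_of_lt h : (0:ℝ) ≤ s) h
    rw [hα.2.2.1] at this; exact this.le

lemma sigma_monotone {n : ℕ} (c r : Fin n → ℝ) (hc : ∀ i, 0 < c i)
    (hr1 : ∀ i, 1 ≤ r i) : MonotoneOn (fun s => ∑ i, c i * s ^ r i) (Set.Ici 0) := by
  intro x hx y _ hxy
  exact Finset.sum_le_sum fun i _ =>
    mul_le_mul_of_nonneg_left (Real.rpow_le_rpow hx hxy (by linarith [hr1 i])) (hc i).le

lemma sigma_strictMono {n : ℕ} (hn : 1 ≤ n) (c r : Fin n → ℝ) (hc : ∀ i, 0 < c i)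
    (hr1 : ∀ i, 1 ≤ r i) : StrictMonoOn (fun s => ∑ i, c i * s ^ r i) (Set.Ici 0) := by
  intro x hx y _ hxy
  have : Nonempty (Fin n) := ⟨⟨0, hn⟩⟩
  exact Finset.sum_lt_sum_of_nonempty Finset.univ_nonempty fun i _ =>
    mul_lt_mul_of_pos_left (Real.rpow_lt_rpow hx hxy (by linarith [hr1 i])) (hc i)

lemma sigma_zero {n : ℕ} (c r : Fin n → ℝ) (hr1 : ∀ i, 1 ≤ r i) :
    ∑ i, c i * (0:ℝ) ^ r i = 0 := by
  apply Finset.sum_eq_zero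
  intro i _
  rw [Real.zero_rpow (by linarith [hr1 i]), mul_zero]

lemma sigma_comp_kinfty {n : ℕ} (hn : 1 ≤ n) (c r : Fin n → ℝ) (hc : ∀ i, 0 < c i)
    (hr1 : ∀ i, 1 ≤ r i) {α : ℝ → ℝ} (hα : IsKInfty α) :
    IsKInfty (fun s => ∑ i, c i * α s ^ r i) := by
  refine ⟨?_, ?_, ?_, ?_⟩
  · apply continuousOn_finset_sum
    intro i _
    exact continuousOn_const.mul (hα.1.rpow_const fun x _ => Or.inr (by linarith [hr1 i]))
  · intro x hx y hy hxy
    exact sigma_strictMono hn c r hc hr1 (kinfty_nonneg hα hx) (kinfty_nonneg hα hy)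
      (hα.2.1 hx hy hxy)
  · simp only [hα.2.2.1]; exact sigma_zero c r hr1
  · apply Filter.tendsto_atTop_mono' _ _ ((hα.2.2.2.const_mul_atTop (hc ⟨0, hn⟩)))
    filter_upwards [hα.2.2.2.eventually_ge_atTop 1] with s hs
    have h1 : ∀ i, (1:ℝ) ≤ α s ^ r i := fun i =>
      Real.one_le_rpow hs (by linarith [hr1 i])
    calc c ⟨0, hn⟩ * α s ≤ c ⟨0, hn⟩ * α s ^ r ⟨0, hn⟩ := by
          have := Real.rpow_le_rpow_of_exponent_le hs (hr1 ⟨0, hn⟩)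
          rw [Real.rpow_one] at this
          exact mul_le_mul_of_nonneg_left this (hc _).le
      _ ≤ ∑ i, c i * α s ^ r i := Finset.single_le_sum (f := fun i => c i * α s ^ r i)
          (fun i _ => mul_nonneg (hc i).le (by linarith [h1 i])) (Finset.mem_univ _)


lemma key_ineq {n : ℕ} (hn : 1 ≤ n) (c r : Fin n → ℝ) (hc : ∀ i, 0 < c i)
    (hr1 : ∀ i, 1 ≤ r i) (hrmono : Monotone r)
    (a b p q : ℝ) (ha : 0 < a) (hb : 0 < b) (hp0 : 0 < p) (hp1 : p < 1) (hq : 1 < q) :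
    ∃ a' b' p' q' : ℝ, 0 < a' ∧ 0 < b' ∧ 0 < p' ∧ p' < 1 ∧ 1 < q' ∧
      ∀ s : ℝ, 0 ≤ s →
        a' * (∑ i, c i * s ^ r i) ^ p' + b' * (∑ i, c i * s ^ r i) ^ q' ≤
        (∑ i, c i * (r i * s ^ (r i - 1))) * (a * s ^ p + b * s ^ q) := by
  have hne : Nonempty (Fin n) := ⟨⟨0, hn⟩⟩
  set i0 : Fin n := ⟨0, hn⟩ with hi0
  set iN : Fin n := ⟨n - 1, by omega⟩ with hiN
  have hle0 : ∀ i, r i0 ≤ r i := fun i => hrmono (by rw [Fin.le_def]; exact Nat.zero_le _)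
  have hleN : ∀ i, r i ≤ r iN := fun i =>
    hrmono (by rw [Fin.le_def]; have := i.isLt; simp only [hiN]; omega)
  have hr0 : 1 ≤ r i0 := hr1 i0
  have hrN : 1 ≤ r iN := hr1 iN
  have r0pos : 0 < r i0 := by linarith
  have rNpos : 0 < r iN := by linarith
  set C : ℝ := ∑ i, c i with hCdef
  have hC : 0 < C := Finset.sum_pos (fun i _ => hc i) Finset.univ_nonempty
  set p' : ℝ := (r i0 - 1 + p) / r i0 with hp'def
  set q' : ℝ := (r iN - 1 + q) / r iN with hq'def
  have hp'0 : 0 < p' := div_pos (by linarith) r0pos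
  have hp'1 : p' < 1 := (div_lt_one r0pos).2 (by linarith)
  have hq'1 : 1 < q' := (one_lt_div rNpos).2 (by linarith)
  set D1 : ℝ := (1 + C ^ (q' - p')) * C ^ p' with hD1def
  set D2 : ℝ := (C ^ (p' - q') + 1) * C ^ q' with hD2def
  have hD1 : 0 < D1 := by
    have := Real.rpow_pos_of_pos hC (q' - p')
    have := Real.rpow_pos_of_pos hC p'
    nlinarith
  have hD2 : 0 < D2 := by
    have := Real.rpow_pos_of_pos hC (p' - q')
    have := Real.rpow_pos_of_pos hC q'
    nlinarith
  set ε : ℝ := min (a * (c i0 * r i0) / D1) (b * (c iN * r iN) / D2) with hεdef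
  have hε : 0 < ε := lt_min (div_pos (mul_pos ha (mul_pos (hc i0) r0pos)) hD1)
    (div_pos (mul_pos hb (mul_pos (hc iN) rNpos)) hD2)
  refine ⟨ε, ε, p', q', hε, hε, hp'0, hp'1, hq'1, ?_⟩
  intro s hs
  rcases eq_or_lt_of_le hs with rfl | hspos
  · have hσ0 : ∑ i, c i * (0:ℝ) ^ r i = 0 := by
      apply Finset.sum_eq_zero
      intro i _
      rw [Real.zero_rpow (by linarith [hr1 i]), mul_zero]
    rw [hσ0, Real.zero_rpow hp'0.ne', Real.zero_rpow (by linarith : q' ≠ 0),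
      Real.zero_rpow hp0.ne', Real.zero_rpow (by linarith : q ≠ 0)]
    simp
  · set t : ℝ := ∑ i, c i * s ^ r i with htdef
    have htpos : 0 < t :=
      Finset.sum_pos (fun i _ => mul_pos (hc i) (Real.rpow_pos_of_pos hspos _))
        Finset.univ_nonempty
    have hσ'nn : ∀ i, 0 ≤ c i * (r i * s ^ (r i - 1)) := fun i =>
      mul_nonneg (hc i).le (mul_nonneg (by linarith [hr1 i]) (Real.rpow_nonneg hs _))
    have hσ'ge : ∀ j, c j * (r j * s ^ (r j - 1)) ≤ ∑ i, c i * (r i * s ^ (r i - 1)) :=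
      fun j => Finset.single_le_sum (f := fun i => c i * (r i * s ^ (r i - 1)))
        (fun i _ => hσ'nn i) (Finset.mem_univ j)
    have hσ'sum : 0 ≤ ∑ i, c i * (r i * s ^ (r i - 1)) :=
      Finset.sum_nonneg fun i _ => hσ'nn i
    have hΨa : a * s ^ p ≤ a * s ^ p + b * s ^ q := by
      have : 0 ≤ b * s ^ q := mul_nonneg hb.le (Real.rpow_nonneg hs _)
      linarith
    have hΨb : b * s ^ q ≤ a * s ^ p + b * s ^ q := by
      have : 0 ≤ a * s ^ p := mul_nonneg ha.le (Real.rpow_nonneg hs _)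
      linarith
    rcases le_total s 1 with hs1 | hs1
    · -- small case: s ≤ 1
      have htle : t ≤ C * s ^ r i0 := by
        rw [hCdef, Finset.sum_mul]
        exact Finset.sum_le_sum fun i _ => mul_le_mul_of_nonneg_left
          (Real.rpow_le_rpow_of_exponent_ge hspos hs1 (hle0 i)) (hc i).le
      have hr0p' : r i0 * p' = r i0 - 1 + p := by
        rw [hp'def, mul_div_cancel₀ _ r0pos.ne']
      have htp : t ^ p' ≤ C ^ p' * s ^ (r i0 - 1 + p) := by
        calc t ^ p' ≤ (C * s ^ r i0) ^ p' := Real.rpow_le_rpow htpos.le htle hp'0.le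
          _ = C ^ p' * (s ^ r i0) ^ p' := Real.mul_rpow hC.le (Real.rpow_nonneg hs _)
          _ = C ^ p' * s ^ (r i0 - 1 + p) := by rw [← Real.rpow_mul hs, hr0p']
      have htC : t ≤ C := by
        have h1 : s ^ r i0 ≤ 1 := Real.rpow_le_one hs hs1 (by linarith)
        nlinarith
      have htq : t ^ q' ≤ C ^ (q' - p') * t ^ p' := by
        have h1 : t ^ q' = t ^ p' * t ^ (q' - p') := by
          rw [← Real.rpow_add htpos]; ring_nf
        have h2 : t ^ (q' - p') ≤ C ^ (q' - p') :=
          Real.rpow_le_rpow htpos.le htC (by linarith)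
        rw [h1]
        calc t ^ p' * t ^ (q' - p') ≤ t ^ p' * C ^ (q' - p') :=
              mul_le_mul_of_nonneg_left h2 (Real.rpow_nonneg htpos.le _)
          _ = C ^ (q' - p') * t ^ p' := mul_comm _ _
      have hεD1 : ε * D1 ≤ a * (c i0 * r i0) := by
        calc ε * D1 ≤ (a * (c i0 * r i0) / D1) * D1 :=
              mul_le_mul_of_nonneg_right (min_le_left _ _) hD1.le
          _ = a * (c i0 * r i0) := div_mul_cancel₀ _ hD1.ne'
      calc ε * t ^ p' + ε * t ^ q'
          ≤ ε * t ^ p' + ε * (C ^ (q' - p') * t ^ p') := by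
            have := mul_le_mul_of_nonneg_left htq hε.le
            linarith
        _ = ε * (1 + C ^ (q' - p')) * t ^ p' := by ring
        _ ≤ ε * (1 + C ^ (q' - p')) * (C ^ p' * s ^ (r i0 - 1 + p)) := by
            apply mul_le_mul_of_nonneg_left htp
            have := Real.rpow_pos_of_pos hC (q' - p')
            nlinarith
        _ = ε * D1 * s ^ (r i0 - 1 + p) := by rw [hD1def]; ring
        _ ≤ (a * (c i0 * r i0)) * s ^ (r i0 - 1 + p) :=
            mul_le_mul_of_nonneg_right hεD1 (Real.rpow_nonneg hs _)
        _ = (c i0 * (r i0 * s ^ (r i0 - 1))) * (a * s ^ p) := by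
            rw [Real.rpow_add hspos]; ring
        _ ≤ (∑ i, c i * (r i * s ^ (r i - 1))) * (a * s ^ p + b * s ^ q) :=
            mul_le_mul (hσ'ge i0) hΨa (mul_nonneg ha.le (Real.rpow_nonneg hs _)) hσ'sum
    · -- large case: 1 ≤ s
      have htle : t ≤ C * s ^ r iN := by
        rw [hCdef, Finset.sum_mul]
        exact Finset.sum_le_sum fun i _ => mul_le_mul_of_nonneg_left
          (Real.rpow_le_rpow_of_exponent_le hs1 (hleN i)) (hc i).le
      have hCt : C ≤ t := by
        rw [hCdef, htdef]
        exact Finset.sum_le_sum fun i _ =>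
          le_mul_of_one_le_right (hc i).le (Real.one_le_rpow hs1 (by linarith [hr1 i]))
      have hrNq' : r iN * q' = r iN - 1 + q := by
        rw [hq'def, mul_div_cancel₀ _ rNpos.ne']
      have htq : t ^ q' ≤ C ^ q' * s ^ (r iN - 1 + q) := by
        calc t ^ q' ≤ (C * s ^ r iN) ^ q' :=
              Real.rpow_le_rpow htpos.le htle (by linarith)
          _ = C ^ q' * (s ^ r iN) ^ q' := Real.mul_rpow hC.le (Real.rpow_nonneg hs _)
          _ = C ^ q' * s ^ (r iN - 1 + q) := by rw [← Real.rpow_mul hs, hrNq']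
      have htp : t ^ p' ≤ C ^ (p' - q') * t ^ q' := by
        have h1 : t ^ p' = t ^ q' * t ^ (p' - q') := by
          rw [← Real.rpow_add htpos]; ring_nf
        have h2 : t ^ (p' - q') ≤ C ^ (p' - q') :=
          Real.rpow_le_rpow_of_nonpos hC hCt (by linarith)
        rw [h1]
        calc t ^ q' * t ^ (p' - q') ≤ t ^ q' * C ^ (p' - q') :=
              mul_le_mul_of_nonneg_left h2 (Real.rpow_nonneg htpos.le _)
          _ = C ^ (p' - q') * t ^ q' := mul_comm _ _
      have hεD2 : ε * D2 ≤ b * (c iN * r iN) := by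
        calc ε * D2 ≤ (b * (c iN * r iN) / D2) * D2 :=
              mul_le_mul_of_nonneg_right (min_le_right _ _) hD2.le
          _ = b * (c iN * r iN) := div_mul_cancel₀ _ hD2.ne'
      calc ε * t ^ p' + ε * t ^ q'
          ≤ ε * (C ^ (p' - q') * t ^ q') + ε * t ^ q' := by
            have := mul_le_mul_of_nonneg_left htp hε.le
            linarith
        _ = ε * (C ^ (p' - q') + 1) * t ^ q' := by ring
        _ ≤ ε * (C ^ (p' - q') + 1) * (C ^ q' * s ^ (r iN - 1 + q)) := by
            apply mul_le_mul_of_nonneg_left htq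
            have := Real.rpow_pos_of_pos hC (p' - q')
            nlinarith
        _ = ε * D2 * s ^ (r iN - 1 + q) := by rw [hD2def]; ring
        _ ≤ (b * (c iN * r iN)) * s ^ (r iN - 1 + q) :=
            mul_le_mul_of_nonneg_right hεD2 (Real.rpow_nonneg hs _)
        _ = (c iN * (r iN * s ^ (r iN - 1))) * (b * s ^ q) := by
            rw [Real.rpow_add hspos]; ring
        _ ≤ (∑ i, c i * (r i * s ^ (r i - 1))) * (a * s ^ p + b * s ^ q) :=
            mul_le_mul (hσ'ge iN) hΨb (mul_nonneg hb.le (Real.rpow_nonneg hs _)) hσ'sum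


/-- **Lemma 5.** If `V` is a fixed-time ISS Lyapunov function for `ẋ = f(x,u)`
and `σ(s) = Σ_{i=1}^n c_i s^{r_i}` with `c_i > 0` and `1 ≤ r_1 < … < r_n`, then
`Ṽ = σ ∘ V` is again a fixed-time ISS Lyapunov function: it is `C¹`, sandwiched
between the class-`K∞` functions `σ ∘ α̲` and `σ ∘ ᾱ`, and satisfies the implication
`Ṽ(x) ≥ σ(χ(|u|)) ⟹ ⟨∇Ṽ(x), f(x,u)⟩ ≤ −Ψ̃(Ṽ(x))` for some class-`K₁^FxT` `Ψ̃`. -/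
theorem stmt_4 (d e : ℕ)
    (f : EuclideanSpace ℝ (Fin d) × EuclideanSpace ℝ (Fin e) → EuclideanSpace ℝ (Fin d))
    (hfcont : Continuous f) (hf0 : f 0 = 0)
    (V : EuclideanSpace ℝ (Fin d) → ℝ)
    (hV : ContDiff ℝ 1 V) (hVnn : ∀ x, 0 ≤ V x)
    (αlow αup : ℝ → ℝ) (hαlow : IsKInfty αlow) (hαup : IsKInfty αup)
    (hsandwich : ∀ x, αlow ‖x‖ ≤ V x ∧ V x ≤ αup ‖x‖)
    (χ : ℝ → ℝ) (hχ : IsKInfty χ)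
    (Ψ : ℝ → ℝ) (hΨ : IsK1FxT Ψ)
    (hiss : ∀ (x : EuclideanSpace ℝ (Fin d)) (u : EuclideanSpace ℝ (Fin e)),
      χ ‖u‖ ≤ V x → (inner ℝ (gradient V x) (f (x, u)) : ℝ) ≤ -Ψ (V x))
    (n : ℕ) (hn : 1 ≤ n) (c r : Fin n → ℝ)
    (hc : ∀ i, 0 < c i) (hr1 : ∀ i, 1 ≤ r i) (hrmono : StrictMono r) :
    ContDiff ℝ 1 (fun x : EuclideanSpace ℝ (Fin d) => ∑ i, c i * V x ^ r i) ∧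
    (∀ x : EuclideanSpace ℝ (Fin d),
      (∑ i, c i * αlow ‖x‖ ^ r i) ≤ (∑ i, c i * V x ^ r i) ∧
      (∑ i, c i * V x ^ r i) ≤ ∑ i, c i * αup ‖x‖ ^ r i) ∧
    IsKInfty (fun s => ∑ i, c i * αlow s ^ r i) ∧
    IsKInfty (fun s => ∑ i, c i * αup s ^ r i) ∧
    ∃ Ψ' : ℝ → ℝ, IsK1FxT Ψ' ∧
      ∀ (x : EuclideanSpace ℝ (Fin d)) (u : EuclideanSpace ℝ (Fin e)),
        (∑ i, c i * χ ‖u‖ ^ r i) ≤ (∑ i, c i * V x ^ r i) →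
        (inner ℝ (gradient (fun y => ∑ i, c i * V y ^ r i) x) (f (x, u)) : ℝ) ≤
          -Ψ' (∑ i, c i * V x ^ r i) := by
  obtain ⟨a, b, p, q, ha, hb, hp0, hp1, hq, hΨeq⟩ := hΨ
  refine ⟨?_, ?_, ?_, ?_, ?_⟩
  · apply ContDiff.sum
    intro i _
    have h1 : ContDiff ℝ (1 : ℕ) (fun t : ℝ => t ^ r i) :=
      Real.contDiff_rpow_const_of_le (by exact_mod_cast hr1 i)
    exact contDiff_const.mul ((h1 : ContDiff ℝ 1 _).comp hV)
  · intro x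
    have h1 : (0:ℝ) ≤ αlow ‖x‖ := kinfty_nonneg hαlow (norm_nonneg x)
    have h2 : (0:ℝ) ≤ V x := hVnn x
    have h3 : (0:ℝ) ≤ αup ‖x‖ := le_trans h2 (hsandwich x).2
    exact ⟨sigma_monotone c r hc hr1 h1 h2 (hsandwich x).1,
      sigma_monotone c r hc hr1 h2 h3 (hsandwich x).2⟩
  · exact sigma_comp_kinfty hn c r hc hr1 hαlow
  · exact sigma_comp_kinfty hn c r hc hr1 hαup
  · obtain ⟨a', b', p', q', ha', hb', hp'0, hp'1, hq'1, hkey⟩ :=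
      key_ineq hn c r hc hr1 hrmono.monotone a b p q ha hb hp0 hp1 hq
    refine ⟨fun t => a' * t ^ p' + b' * t ^ q',
      ⟨a', b', p', q', ha', hb', hp'0, hp'1, hq'1, fun s _ => rfl⟩, ?_⟩
    intro x u hle
    have hχu : (0:ℝ) ≤ χ ‖u‖ := kinfty_nonneg hχ (norm_nonneg u)
    have hVx : (0:ℝ) ≤ V x := hVnn x
    have hchi : χ ‖u‖ ≤ V x := by
      by_contra h
      push_neg at h
      exact absurd hle (not_le.2 (sigma_strictMono hn c r hc hr1 hVx hχu h))
    have hinner := hiss x u hchi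
    set g' : ℝ := ∑ i, c i * (r i * V x ^ (r i - 1)) with hg'def
    have hgd : HasDerivAt (fun t : ℝ => ∑ i, c i * t ^ r i) g' (V x) := by
      apply HasDerivAt.fun_sum
      intro i _
      exact (Real.hasDerivAt_rpow_const (Or.inr (hr1 i))).const_mul (c i)
    have hVd : HasFDerivAt V (fderiv ℝ V x) x :=
      (hV.differentiable one_ne_zero x).hasFDerivAt
    have hcomp : HasFDerivAt (fun y => ∑ i, c i * V y ^ r i)
        (g' • fderiv ℝ V x) x := hgd.comp_hasFDerivAt x hVd
    have hgradeq : gradient (fun y => ∑ i, c i * V y ^ r i) x = g' • gradient V x := by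
      rw [hcomp.hasGradientAt.gradient, map_smul]
      rfl
    rw [hgradeq, real_inner_smul_left]
    have hg'nn : 0 ≤ g' := Finset.sum_nonneg fun i _ =>
      mul_nonneg (hc i).le (mul_nonneg (by linarith [hr1 i]) (Real.rpow_nonneg hVx _))
    have h2 : g' * (inner ℝ (gradient V x) (f (x, u)) : ℝ) ≤ g' * (-Ψ (V x)) :=
      mul_le_mul_of_nonneg_left hinner hg'nn
    have h3 := hkey (V x) hVx
    rw [hΨeq (V x) hVx] at h2
    rw [← hg'def] at h3
    show g' * (inner ℝ (gradient V x) (f (x, u)) : ℝ) ≤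
      -(a' * (∑ i, c i * V x ^ r i) ^ p' + b' * (∑ i, c i * V x ^ r i) ^ q')
    linarith
end

section
/- Let f : ℝⁿ × ℝᵐ → ℝⁿ be continuous with f(0,0) = 0, and let V : ℝⁿ → [0,∞) be continuously differentiable. Assume there exist functions α̲, ᾱ of class K∞ with α̲(|x|) ≤ V(x) ≤ ᾱ(|x|) for all x ∈ ℝⁿ, a function χ of class K∞, and a function Ψ of class K₁^FxT such that for all x ∈ ℝⁿ and u ∈ ℝᵐ: V(x) ≥ χ(|u|) implies ⟨∇V(x), f(x,u)⟩ ≤ −Ψ(V(x)). Let g(s) = Σ_{i=1}^n c_i·s^{r_i} with c_i > 0 and 0 < r_1 < … < r_n, and let γ : [0,∞) → [0,∞) be the inverse of g. Then there exists λ ≥ 1 such that Ṽ(x) := γ(V(x))^λ is continuously differentiable on ℝⁿ, satisfies γ(α̲(|x|))^λ ≤ Ṽ(x) ≤ γ(ᾱ(|x|))^λ for all x with s ↦ γ(s)^λ composed with α̲ and ᾱ of class K∞, and there exists a function Ψ̃ of class K₁^FxT such that for all x ∈ ℝⁿ and u ∈ ℝᵐ: Ṽ(x) ≥ γ(χ(|u|))^λ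 implies ⟨∇Ṽ(x), f(x,u)⟩ ≤ −Ψ̃(Ṽ(x)). -/
section Stmt5AuxSection

open Real Filter Set



namespace Stmt5Aux

variable {n : ℕ} (c r : Fin n → ℝ)

/-- the polynomial-like gain -/
noncomputable def gP (t : ℝ) : ℝ := ∑ i, c i * t ^ r i

/-- its derivative -/
noncomputable def gD (t : ℝ) : ℝ := ∑ i, c i * (r i * t ^ (r i - 1))

variable {c r}

lemma gP_nonneg (hc : ∀ i, 0 < c i) {t : ℝ} (ht : 0 ≤ t) : 0 ≤ gP c r t :=
  Finset.sum_nonneg fun i _ => mul_nonneg (hc i).le (Real.rpow_nonneg ht _)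

lemma gP_zero (hr0 : ∀ i, 0 < r i) : gP c r 0 = 0 := by
  unfold gP
  apply Finset.sum_eq_zero
  intro i _
  rw [Real.zero_rpow (hr0 i).ne', mul_zero]

lemma single_le_gP (hc : ∀ i, 0 < c i) {t : ℝ} (ht : 0 ≤ t) (i : Fin n) :
    c i * t ^ r i ≤ gP c r t :=
  Finset.single_le_sum (f := fun j => c j * t ^ r j)
    (fun j _ => mul_nonneg (hc j).le (Real.rpow_nonneg ht _)) (Finset.mem_univ i)

lemma gD_pos (hn : 1 ≤ n) (hc : ∀ i, 0 < c i) (hr0 : ∀ i, 0 < r i) {t : ℝ} (ht : 0 < t) :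
    0 < gD c r t := by
  have : Nonempty (Fin n) := ⟨⟨0, hn⟩⟩
  exact Finset.sum_pos (fun i _ => mul_pos (hc i)
    (mul_pos (hr0 i) (Real.rpow_pos_of_pos ht _))) Finset.univ_nonempty

lemma single_le_gD (hc : ∀ i, 0 < c i) (hr0 : ∀ i, 0 < r i) {t : ℝ} (ht : 0 < t) (i : Fin n) :
    c i * (r i * t ^ (r i - 1)) ≤ gD c r t :=
  Finset.single_le_sum (f := fun j => c j * (r j * t ^ (r j - 1)))
    (fun j _ => mul_nonneg (hc j).le
      (mul_nonneg (hr0 j).le (Real.rpow_nonneg ht.le _))) (Finset.mem_univ i)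

lemma gP_hasDerivAt {t : ℝ} (ht : t ≠ 0) : HasDerivAt (gP c r) (gD c r t) t := by
  unfold gP gD
  exact HasDerivAt.fun_sum fun i _ =>
    (Real.hasDerivAt_rpow_const (Or.inl ht)).const_mul (c i)

lemma gD_continuousAt {t : ℝ} (ht : t ≠ 0) : ContinuousAt (gD c r) t := by
  unfold gD
  exact tendsto_finset_sum _ fun i _ =>
    (((Real.continuousAt_rpow_const _ _ (Or.inl ht)).const_mul _).const_mul _)

/-- upper bound on derivative: `gD t ≤ C (t^{r₁-1} + t^{rₙ-1})` with `C = ∑ cᵢ rᵢ`,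
if `r i0 ≤ r i ≤ r iN` for all `i`. -/
lemma gD_le (hc : ∀ i, 0 < c i) (hr0 : ∀ i, 0 < r i) {t : ℝ} (ht : 0 < t)
    (i0 iN : Fin n) (hle : ∀ i, r i0 ≤ r i) (hge : ∀ i, r i ≤ r iN) :
    gD c r t ≤ (∑ i, c i * r i) * (t ^ (r i0 - 1) + t ^ (r iN - 1)) := by
  rw [Finset.sum_mul]
  apply Finset.sum_le_sum
  intro i _
  have hbound : t ^ (r i - 1) ≤ t ^ (r i0 - 1) + t ^ (r iN - 1) := by
    rcases le_total t 1 with h1 | h1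
    · have : t ^ (r i - 1) ≤ t ^ (r i0 - 1) :=
        Real.rpow_le_rpow_of_exponent_ge ht h1 (by linarith [hle i])
      have h2 : 0 ≤ t ^ (r iN - 1) := Real.rpow_nonneg ht.le _
      linarith
    · have : t ^ (r i - 1) ≤ t ^ (r iN - 1) :=
        Real.rpow_le_rpow_of_exponent_le h1 (by linarith [hge i])
      have h2 : 0 ≤ t ^ (r i0 - 1) := Real.rpow_nonneg ht.le _
      linarith
  calc c i * (r i * t ^ (r i - 1)) = (c i * r i) * t ^ (r i - 1) := by ring
  _ ≤ (c i * r i) * (t ^ (r i0 - 1) + t ^ (r iN - 1)) :=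
      mul_le_mul_of_nonneg_left hbound (mul_nonneg (hc i).le (hr0 i).le)




section Gamma

variable {n : ℕ} {c r : Fin n → ℝ} {γ : ℝ → ℝ}
variable (hn : 1 ≤ n) (hc : ∀ i, 0 < c i) (hr0 : ∀ i, 0 < r i)
variable (hγcont : ContinuousOn γ (Set.Ici 0))
variable (hγmono : StrictMonoOn γ (Set.Ici 0))
variable (hγbij : Set.BijOn γ (Set.Ici 0) (Set.Ici 0))
variable (hγinv : ∀ s : ℝ, 0 ≤ s → γ (∑ i, c i * s ^ r i) = s)

include hγinv

lemma gamma_gP (s : ℝ) (hs : 0 ≤ s) : γ (gP c r s) = s := hγinv s hs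

include hr0 in
lemma gamma_zero : γ 0 = 0 := by
  have := hγinv 0 le_rfl
  rwa [show (∑ i, c i * (0:ℝ) ^ r i) = gP c r 0 from rfl, gP_zero hr0] at this

omit hγinv

include hγbij in
lemma gamma_nonneg {s : ℝ} (hs : 0 ≤ s) : 0 ≤ γ s := hγbij.mapsTo hs

include hγbij hγmono hr0 hγinv in
omit hγbij in lemma gamma_pos {s : ℝ} (hs : 0 < s) : 0 < γ s := by
  have h0 := gamma_zero hr0 hγinv
  have := hγmono (Set.self_mem_Ici) (Set.mem_Ici.2 hs.le) hs
  rwa [h0] at this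

include hc hγbij hγinv in
lemma gP_gamma {t : ℝ} (ht : 0 ≤ t) : gP c r (γ t) = t := by
  have hγt : 0 ≤ γ t := gamma_nonneg hγbij ht
  have h1 : γ (gP c r (γ t)) = γ t := hγinv (γ t) hγt
  exact hγbij.injOn (Set.mem_Ici.2 (gP_nonneg hc hγt)) (Set.mem_Ici.2 ht) h1

include hc hr0 hγmono hγbij hγinv in
set_option linter.unusedSectionVars false in
lemma gamma_tendsto : Tendsto γ atTop atTop := by
  rw [tendsto_atTop_atTop]
  intro b
  refine ⟨gP c r (max b 0), fun s hs => ?_⟩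
  have hb0 : (0:ℝ) ≤ max b 0 := le_max_right _ _
  have hgb : 0 ≤ gP c r (max b 0) := gP_nonneg hc hb0
  have hmono := hγmono.monotoneOn
  have : γ (gP c r (max b 0)) ≤ γ s :=
    hmono (Set.mem_Ici.2 hgb) (Set.mem_Ici.2 (hgb.trans hs)) hs
  rw [gamma_gP hγinv _ hb0] at this
  exact le_trans (le_max_left b 0) this

include hn hc hr0 hγcont hγmono hγbij hγinv in
lemma gamma_hasDerivAt {s : ℝ} (hs : 0 < s) :
    HasDerivAt γ (gD c r (γ s))⁻¹ s := by
  have hγs : 0 < γ s := gamma_pos hr0 hγmono hγinv hs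
  apply HasDerivAt.of_local_left_inverse
    (hγcont.continuousAt (Ici_mem_nhds hs))
    (gP_hasDerivAt hγs.ne')
    (gD_pos hn hc hr0 hγs).ne'
  filter_upwards [Ioi_mem_nhds hs] with y hy
  exact gP_gamma hc hγbij hγinv (le_of_lt hy)

include hc hr0 hγbij hγinv in
lemma gamma_le (i0 : Fin n) {s : ℝ} (hs : 0 ≤ s) :
    γ s ≤ (s / c i0) ^ (r i0)⁻¹ := by
  have hγs : 0 ≤ γ s := gamma_nonneg hγbij hs
  have h1 : c i0 * (γ s) ^ r i0 ≤ s :=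
    le_of_le_of_eq (single_le_gP hc hγs i0) (gP_gamma hc hγbij hγinv hs)
  have h2 : (γ s) ^ r i0 ≤ s / c i0 := by
    rw [le_div_iff₀ (hc i0)]
    linarith [h1]
  have hinv : (0:ℝ) ≤ (r i0)⁻¹ := inv_nonneg.2 (hr0 i0).le
  calc γ s = ((γ s) ^ r i0) ^ (r i0)⁻¹ := by
        rw [← Real.rpow_mul hγs, mul_inv_cancel₀ (hr0 i0).ne', Real.rpow_one]
  _ ≤ (s / c i0) ^ (r i0)⁻¹ :=
      Real.rpow_le_rpow (Real.rpow_nonneg hγs _) h2 hinv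

end Gamma




/-- the derivative multiplier -/
noncomputable def mfun (c r : Fin n → ℝ) (γ : ℝ → ℝ) (lam : ℝ) (s : ℝ) : ℝ :=
  lam * γ s ^ (lam - 1) * (gD c r (γ s))⁻¹

section Phi

variable {n : ℕ} {c r : Fin n → ℝ} {γ : ℝ → ℝ} {lam : ℝ}
variable (hn : 1 ≤ n) (hc : ∀ i, 0 < c i) (hr0 : ∀ i, 0 < r i)
variable (hγcont : ContinuousOn γ (Set.Ici 0))
variable (hγmono : StrictMonoOn γ (Set.Ici 0))
variable (hγbij : Set.BijOn γ (Set.Ici 0) (Set.Ici 0))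
variable (hγinv : ∀ s : ℝ, 0 ≤ s → γ (∑ i, c i * s ^ r i) = s)

include hn hc hr0 hγcont hγmono hγbij hγinv in
lemma phi_hasDerivAt (hlam : 1 ≤ lam) {s : ℝ} (hs : 0 < s) :
    HasDerivAt (fun u => γ u ^ lam) (mfun c r γ lam s) s := by
  have h1 : HasDerivAt (fun x : ℝ => x ^ lam) (lam * γ s ^ (lam - 1)) (γ s) :=
    Real.hasDerivAt_rpow_const (Or.inr hlam)
  have h2 := gamma_hasDerivAt hn hc hr0 hγcont hγmono hγbij hγinv hs
  exact h1.comp s h2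

lemma mfun_nonneg (hn : 1 ≤ n) (hc : ∀ i, 0 < c i) (hr0 : ∀ i, 0 < r i)
    (hlam : 0 < lam) {s : ℝ} (hγs : 0 < γ s) : 0 ≤ mfun c r γ lam s := by
  have := gD_pos hn hc hr0 hγs
  have := Real.rpow_nonneg hγs.le (lam - 1)
  unfold mfun
  positivity

lemma mfun_le (hn : 1 ≤ n) (hc : ∀ i, 0 < c i) (hr0 : ∀ i, 0 < r i)
    (hlam : 0 < lam) (i0 : Fin n) {s : ℝ} (hγs : 0 < γ s) :
    mfun c r γ lam s ≤ lam / (c i0 * r i0) * γ s ^ (lam - r i0) := by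
  set t := γ s with hts
  have hgd : 0 < gD c r t := gD_pos hn hc hr0 hγs
  have hci := hc i0
  have hri := hr0 i0
  have htr : (0:ℝ) < t ^ (r i0 - 1) := Real.rpow_pos_of_pos hγs _
  have hlb : 0 < c i0 * (r i0 * t ^ (r i0 - 1)) := by positivity
  have h1 : mfun c r γ lam s ≤ lam * t ^ (lam - 1) * (c i0 * (r i0 * t ^ (r i0 - 1)))⁻¹ := by
    unfold mfun
    have hnum : 0 ≤ lam * t ^ (lam - 1) :=
      mul_nonneg hlam.le (Real.rpow_nonneg hγs.le _)
    exact mul_le_mul_of_nonneg_left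
      (inv_anti₀ hlb (single_le_gD hc hr0 hγs i0)) hnum
  refine h1.trans_eq ?_
  have e1 : t ^ (lam - 1) = t ^ (lam - r i0) * t ^ (r i0 - 1) := by
    rw [← Real.rpow_add hγs]; ring_nf
  rw [e1]
  field_simp

end Phi




set_option maxHeartbeats 1000000 in
lemma key_core {n : ℕ} {c r : Fin n → ℝ} (hn : 1 ≤ n)
    (hc : ∀ i, 0 < c i) (hr0 : ∀ i, 0 < r i)
    (i0 iN : Fin n) (hle : ∀ i, r i0 ≤ r i) (hge : ∀ i, r i ≤ r iN)
    {a b p q lam : ℝ} (ha : 0 < a) (hb : 0 < b) (hp0 : 0 < p) (hp1 : p < 1)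
    (hq1 : 1 < q) (hlam : r i0 * (1 - p) < lam) (hlam0 : 0 < lam) :
    ∃ A p' q' : ℝ, 0 < A ∧ 0 < p' ∧ p' < 1 ∧ 1 < q' ∧ ∀ t : ℝ, 0 < t →
      A * (t ^ lam) ^ p' + A * (t ^ lam) ^ q' ≤
        (lam * t ^ (lam - 1) * (gD c r t)⁻¹) *
          (a * (gP c r t) ^ p + b * (gP c r t) ^ q) := by
  have : Nonempty (Fin n) := ⟨⟨0, hn⟩⟩
  have hci0 := hc i0
  have hciN := hc iN
  have hri0 := hr0 i0
  have hriN := hr0 iN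
  set C : ℝ := ∑ i, c i * r i with hCdef
  have hC : 0 < C :=
    Finset.sum_pos (fun i _ => mul_pos (hc i) (hr0 i)) Finset.univ_nonempty
  set K1 : ℝ := lam * (a * c i0 ^ p) / (2 * C) with hK1def
  set K2 : ℝ := lam * (b * c iN ^ q) / (2 * C) with hK2def
  have hK1 : 0 < K1 := by
    have : (0:ℝ) < c i0 ^ p := Real.rpow_pos_of_pos hci0 p
    positivity
  have hK2 : 0 < K2 := by
    have : (0:ℝ) < c iN ^ q := Real.rpow_pos_of_pos hciN q
    positivity
  set A : ℝ := min K1 K2 / 2 with hAdef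
  have hA : 0 < A := by positivity
  set p' : ℝ := (lam - r i0 * (1 - p)) / lam with hp'def
  set q' : ℝ := (lam + r iN * (q - 1)) / lam with hq'def
  have hp'0 : 0 < p' := div_pos (by linarith) hlam0
  have hp'1 : p' < 1 := by
    rw [hp'def, div_lt_one hlam0]
    nlinarith [mul_pos hri0 (sub_pos.2 hp1)]
  have hq'1 : 1 < q' := by
    rw [hq'def, lt_div_iff₀ hlam0]
    nlinarith [mul_pos hriN (sub_pos.2 hq1)]
  have hp'q' : p' ≤ q' := (hp'1.trans hq'1).le
  refine ⟨A, p', q', hA, hp'0, hp'1, hq'1, ?_⟩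
  intro t ht
  have hσ : 0 < t ^ lam := Real.rpow_pos_of_pos ht lam
  have hgd : 0 < gD c r t := gD_pos hn hc hr0 ht
  have hgP : 0 < gP c r t :=
    lt_of_lt_of_le (mul_pos hci0 (Real.rpow_pos_of_pos ht _)) (single_le_gP hc ht.le i0)
  have ep : (t ^ lam) ^ p' = t ^ (lam - r i0 * (1 - p)) := by
    rw [← Real.rpow_mul ht.le]
    congr 1
    rw [hp'def]
    field_simp
  have eq' : (t ^ lam) ^ q' = t ^ (lam + r iN * (q - 1)) := by
    rw [← Real.rpow_mul ht.le]
    congr 1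
    rw [hq'def]
    field_simp
  have hnum : (0:ℝ) ≤ lam * t ^ (lam - 1) :=
    mul_nonneg hlam0.le (Real.rpow_nonneg ht.le _)
  rcases le_total t 1 with h1 | h1
  · -- small t : use the K1 term
    have hσ1 : t ^ lam ≤ 1 := Real.rpow_le_one ht.le h1 hlam0.le
    have hqp : (t ^ lam) ^ q' ≤ (t ^ lam) ^ p' :=
      Real.rpow_le_rpow_of_exponent_ge hσ hσ1 hp'q'
    have h2A : 2 * A ≤ K1 := by
      rw [hAdef]
      have := min_le_left K1 K2
      linarith
    have hgdle : gD c r t ≤ 2 * C * t ^ (r i0 - 1) := by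
      have hup := gD_le hc hr0 ht i0 iN hle hge
      have h2 : t ^ (r iN - 1) ≤ t ^ (r i0 - 1) :=
        Real.rpow_le_rpow_of_exponent_ge ht h1 (by linarith [hle iN])
      nlinarith
    have hΨlb : a * (c i0 ^ p * t ^ (r i0 * p)) ≤
        a * (gP c r t) ^ p + b * (gP c r t) ^ q := by
      have h3 : c i0 * t ^ r i0 ≤ gP c r t := single_le_gP hc ht.le i0
      have h4 : (c i0 * t ^ r i0) ^ p ≤ (gP c r t) ^ p :=
        Real.rpow_le_rpow (by positivity) h3 hp0.le
      rw [Real.mul_rpow hci0.le (Real.rpow_nonneg ht.le _), ← Real.rpow_mul ht.le] at h4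
      nlinarith [Real.rpow_nonneg hgP.le q, mul_le_mul_of_nonneg_left h4 ha.le]
    have htr : (0:ℝ) < t ^ (r i0 - 1) := Real.rpow_pos_of_pos ht _
    have ediv : t ^ (lam - 1) * t ^ (r i0 * p) / t ^ (r i0 - 1) =
        t ^ (lam - r i0 * (1 - p)) := by
      rw [← Real.rpow_add ht, ← Real.rpow_sub ht]
      ring_nf
    have eE : lam * t ^ (lam - 1) * (2 * C * t ^ (r i0 - 1))⁻¹ *
        (a * (c i0 ^ p * t ^ (r i0 * p))) = K1 * t ^ (lam - r i0 * (1 - p)) := by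
      rw [← ediv, hK1def]
      field_simp
    calc A * (t ^ lam) ^ p' + A * (t ^ lam) ^ q'
        ≤ K1 * (t ^ lam) ^ p' := by nlinarith [Real.rpow_nonneg hσ.le p']
      _ = K1 * t ^ (lam - r i0 * (1 - p)) := by rw [ep]
      _ = lam * t ^ (lam - 1) * (2 * C * t ^ (r i0 - 1))⁻¹ *
            (a * (c i0 ^ p * t ^ (r i0 * p))) := eE.symm
      _ ≤ lam * t ^ (lam - 1) * (gD c r t)⁻¹ *
            (a * (c i0 ^ p * t ^ (r i0 * p))) := by
          have hinv : (2 * C * t ^ (r i0 - 1))⁻¹ ≤ (gD c r t)⁻¹ := inv_anti₀ hgd hgdle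
          have hrhs : (0:ℝ) ≤ a * (c i0 ^ p * t ^ (r i0 * p)) := by
            have := Real.rpow_pos_of_pos hci0 p
            have := Real.rpow_pos_of_pos ht (r i0 * p)
            positivity
          exact mul_le_mul_of_nonneg_right (mul_le_mul_of_nonneg_left hinv hnum) hrhs
      _ ≤ lam * t ^ (lam - 1) * (gD c r t)⁻¹ *
            (a * (gP c r t) ^ p + b * (gP c r t) ^ q) :=
          mul_le_mul_of_nonneg_left hΨlb (by positivity)
  · -- large t : use the K2 term
    have hσ1 : 1 ≤ t ^ lam := Real.one_le_rpow h1 hlam0.le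
    have hqp : (t ^ lam) ^ p' ≤ (t ^ lam) ^ q' :=
      Real.rpow_le_rpow_of_exponent_le hσ1 hp'q'
    have h2A : 2 * A ≤ K2 := by
      rw [hAdef]
      have := min_le_right K1 K2
      linarith
    have hgdle : gD c r t ≤ 2 * C * t ^ (r iN - 1) := by
      have hup := gD_le hc hr0 ht i0 iN hle hge
      have h2 : t ^ (r i0 - 1) ≤ t ^ (r iN - 1) :=
        Real.rpow_le_rpow_of_exponent_le h1 (by linarith [hge i0])
      nlinarith
    have hΨlb : b * (c iN ^ q * t ^ (r iN * q)) ≤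
        a * (gP c r t) ^ p + b * (gP c r t) ^ q := by
      have h3 : c iN * t ^ r iN ≤ gP c r t := single_le_gP hc ht.le iN
      have h4 : (c iN * t ^ r iN) ^ q ≤ (gP c r t) ^ q :=
        Real.rpow_le_rpow (by positivity) h3 (by linarith)
      rw [Real.mul_rpow hciN.le (Real.rpow_nonneg ht.le _), ← Real.rpow_mul ht.le] at h4
      nlinarith [Real.rpow_nonneg hgP.le p, mul_le_mul_of_nonneg_left h4 hb.le]
    have htr : (0:ℝ) < t ^ (r iN - 1) := Real.rpow_pos_of_pos ht _
    have ediv : t ^ (lam - 1) * t ^ (r iN * q) / t ^ (r iN - 1) =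
        t ^ (lam + r iN * (q - 1)) := by
      rw [← Real.rpow_add ht, ← Real.rpow_sub ht]
      ring_nf
    have eE : lam * t ^ (lam - 1) * (2 * C * t ^ (r iN - 1))⁻¹ *
        (b * (c iN ^ q * t ^ (r iN * q))) = K2 * t ^ (lam + r iN * (q - 1)) := by
      rw [← ediv, hK2def]
      field_simp
    calc A * (t ^ lam) ^ p' + A * (t ^ lam) ^ q'
        ≤ K2 * (t ^ lam) ^ q' := by nlinarith [Real.rpow_nonneg hσ.le q']
      _ = K2 * t ^ (lam + r iN * (q - 1)) := by rw [eq']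
      _ = lam * t ^ (lam - 1) * (2 * C * t ^ (r iN - 1))⁻¹ *
            (b * (c iN ^ q * t ^ (r iN * q))) := eE.symm
      _ ≤ lam * t ^ (lam - 1) * (gD c r t)⁻¹ *
            (b * (c iN ^ q * t ^ (r iN * q))) := by
          have hinv : (2 * C * t ^ (r iN - 1))⁻¹ ≤ (gD c r t)⁻¹ := inv_anti₀ hgd hgdle
          have hrhs : (0:ℝ) ≤ b * (c iN ^ q * t ^ (r iN * q)) := by
            have := Real.rpow_pos_of_pos hciN q
            have := Real.rpow_pos_of_pos ht (r iN * q)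
            positivity
          exact mul_le_mul_of_nonneg_right (mul_le_mul_of_nonneg_left hinv hnum) hrhs
      _ ≤ lam * t ^ (lam - 1) * (gD c r t)⁻¹ *
            (a * (gP c r t) ^ p + b * (gP c r t) ^ q) :=
          mul_le_mul_of_nonneg_left hΨlb (by positivity)


end Stmt5Aux

end Stmt5AuxSection


open Real Filter Set Stmt5Aux in
/-- **Lemma 6.** If `V` is a fixed-time ISS Lyapunov function for `ẋ = f(x,u)`,
`g(s) = Σ_{i=1}^n c_i s^{r_i}` with `c_i > 0`, `0 < r_1 < … < r_n`, and `γ` is the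
inverse of `g`, then there is `λ ≥ 1` such that `Ṽ(x) = γ(V(x))^λ` is again a
fixed-time ISS Lyapunov function: it is `C¹`, sandwiched between the class-`K∞`
functions `s ↦ γ(α̲(s))^λ` and `s ↦ γ(ᾱ(s))^λ`, and satisfies
`Ṽ(x) ≥ γ(χ(|u|))^λ ⟹ ⟨∇Ṽ(x), f(x,u)⟩ ≤ −Ψ̃(Ṽ(x))` for some class-`K₁^FxT` `Ψ̃`. -/
theorem stmt_5 (d e : ℕ)
    (f : EuclideanSpace ℝ (Fin d) × EuclideanSpace ℝ (Fin e) → EuclideanSpace ℝ (Fin d))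
    (hfcont : Continuous f) (hf0 : f 0 = 0)
    (V : EuclideanSpace ℝ (Fin d) → ℝ)
    (hV : ContDiff ℝ 1 V) (hVnn : ∀ x, 0 ≤ V x)
    (αlow αup : ℝ → ℝ) (hαlow : IsKInfty αlow) (hαup : IsKInfty αup)
    (hsandwich : ∀ x, αlow ‖x‖ ≤ V x ∧ V x ≤ αup ‖x‖)
    (χ : ℝ → ℝ) (hχ : IsKInfty χ)
    (Ψ : ℝ → ℝ) (hΨ : IsK1FxT Ψ)
    (hiss : ∀ (x : EuclideanSpace ℝ (Fin d)) (u : EuclideanSpace ℝ (Fin e)),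
      χ ‖u‖ ≤ V x → (inner ℝ (gradient V x) (f (x, u)) : ℝ) ≤ -Ψ (V x))
    (n : ℕ) (hn : 1 ≤ n) (c r : Fin n → ℝ)
    (hc : ∀ i, 0 < c i) (hr0 : ∀ i, 0 < r i) (hrmono : StrictMono r)
    (γ : ℝ → ℝ)
    (hγcont : ContinuousOn γ (Set.Ici 0))
    (hγmono : StrictMonoOn γ (Set.Ici 0))
    (hγbij : Set.BijOn γ (Set.Ici 0) (Set.Ici 0))
    (hγinv : ∀ s : ℝ, 0 ≤ s → γ (∑ i, c i * s ^ r i) = s) :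
    ∃ lam : ℝ, 1 ≤ lam ∧
      ContDiff ℝ 1 (fun x : EuclideanSpace ℝ (Fin d) => γ (V x) ^ lam) ∧
      (∀ x : EuclideanSpace ℝ (Fin d),
        γ (αlow ‖x‖) ^ lam ≤ γ (V x) ^ lam ∧ γ (V x) ^ lam ≤ γ (αup ‖x‖) ^ lam) ∧
      IsKInfty (fun s => γ (αlow s) ^ lam) ∧
      IsKInfty (fun s => γ (αup s) ^ lam) ∧
      ∃ Ψ' : ℝ → ℝ, IsK1FxT Ψ' ∧
        ∀ (x : EuclideanSpace ℝ (Fin d)) (u : EuclideanSpace ℝ (Fin e)),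
          γ (χ ‖u‖) ^ lam ≤ γ (V x) ^ lam →
          (inner ℝ (gradient (fun y => γ (V y) ^ lam) x) (f (x, u)) : ℝ) ≤
            -Ψ' (γ (V x) ^ lam) := by
    classical
  obtain ⟨a, b, p, q, ha, hb, hp0, hp1, hq1, hΨeq⟩ := hΨ
  -- indices
  set i0 : Fin n := ⟨0, hn⟩ with hi0def
  set iN : Fin n := ⟨n - 1, Nat.sub_lt hn one_pos⟩ with hiNdef
  have hle : ∀ i, r i0 ≤ r i := fun i =>
    hrmono.monotone (by rw [Fin.le_def]; exact Nat.zero_le _)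
  have hge : ∀ i, r i ≤ r iN := fun i =>
    hrmono.monotone (by rw [Fin.le_def]; have := i.isLt; simp only [hiNdef]; omega)
  have hr1 := hr0 i0
  have hci0 := hc i0
  have hciN := hc iN
  -- the exponent
  set lam : ℝ := 1 + 2 * r i0 with hlamdef
  have hlam1 : 1 ≤ lam := by rw [hlamdef]; linarith
  have hlam0 : 0 < lam := by linarith
  have hlamne : lam ≠ 0 := hlam0.ne'
  have hlamgt : r i0 * (1 - p) < lam := by
    rw [hlamdef]; nlinarith
  have hlam_sub : 0 < lam - r i0 := by rw [hlamdef]; linarith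
  -- basic γ facts
  have hγ0 : γ 0 = 0 := gamma_zero hr0 hγinv
  have hγnn : ∀ {s : ℝ}, 0 ≤ s → 0 ≤ γ s := fun {s} hs => gamma_nonneg hγbij hs
  have hγpos : ∀ {s : ℝ}, 0 < s → 0 < γ s := fun {s} hs =>
    gamma_pos hr0 hγmono hγinv hs
  have hγtend : Tendsto γ atTop atTop :=
    gamma_tendsto hc hr0 hγmono hγbij hγinv
  -- basic V facts
  have hVd : Differentiable ℝ V := hV.differentiable one_ne_zero
  obtain ⟨hαuc, hαum, hαu0, hαut⟩ := hαup
  obtain ⟨hαlc, hαlm, hαl0, hαlt⟩ := hαlow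
  obtain ⟨hχc, hχm, hχ0, hχt⟩ := hχ
  have hV0 : V 0 = 0 := by
    have h1 := (hsandwich 0).2
    rw [norm_zero, hαu0] at h1
    exact le_antisymm h1 (hVnn 0)
  have hVpos : ∀ x : EuclideanSpace ℝ (Fin d), x ≠ 0 → 0 < V x := by
    intro x hx
    have h1 : αlow 0 < αlow ‖x‖ :=
      hαlm Set.self_mem_Ici (Set.mem_Ici.2 (norm_nonneg x)) (norm_pos_iff.2 hx)
    rw [hαl0] at h1
    exact h1.trans_le (hsandwich x).1
  have hWcont : Continuous fun x : EuclideanSpace ℝ (Fin d) => γ (V x) :=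
    hγcont.comp_continuous hV.continuous fun x => hVnn x
  -- derivative away from 0
  have hTd : ∀ x : EuclideanSpace ℝ (Fin d), x ≠ 0 →
      HasFDerivAt (fun y : EuclideanSpace ℝ (Fin d) => γ (V y) ^ lam)
        (mfun c r γ lam (V x) • fderiv ℝ V x) x := by
    intro x hx
    exact (phi_hasDerivAt hn hc hr0 hγcont hγmono hγbij hγinv hlam1
      (hVpos x hx)).comp_hasFDerivAt x (hVd x).hasFDerivAt
  -- derivative at 0
  have hlittle : (fun x : EuclideanSpace ℝ (Fin d) => γ (V x) ^ lam) =o[nhds (0 : EuclideanSpace ℝ (Fin d))] fun x => x := by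
    have hO := (hVd 0).isBigO_sub
    simp only [hV0, sub_zero] at hO
    obtain ⟨CV, hCV, hVb'⟩ := hO.exists_pos
    have hVb := hVb'.bound
    rw [Asymptotics.isLittleO_iff]
    intro ε hε
    set ee : ℝ := (r i0)⁻¹ * lam with heedef
    have hee2 : 2 ≤ ee := by
      have hee' : ee = (r i0)⁻¹ + 2 := by
        rw [heedef, hlamdef]
        field_simp
      rw [hee']
      have := inv_nonneg.2 hr1.le
      linarith
    have heene : ee ≠ 0 := by positivity
    set M : ℝ := (CV / c i0) ^ ee + 1 with hMdef
    have hM : 0 < M := by positivity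
    have hδ : 0 < min 1 (ε / M) := lt_min one_pos (div_pos hε hM)
    have hball : ∀ᶠ x : EuclideanSpace ℝ (Fin d) in nhds 0, ‖x‖ < min 1 (ε / M) := by
      filter_upwards [Metric.ball_mem_nhds (0 : EuclideanSpace ℝ (Fin d)) hδ] with x hx
      simpa [Metric.mem_ball, dist_zero_right] using hx
    filter_upwards [hVb, hball] with x hx1 hx2
    have hVx0 : 0 ≤ V x := hVnn x
    have hVle : V x ≤ CV * ‖x‖ := by
      have : V x ≤ ‖V x‖ := le_abs_self _
      calc V x ≤ ‖V x‖ := this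
        _ ≤ CV * ‖x‖ := by simpa using hx1
    have h1 : γ (V x) ≤ (V x / c i0) ^ (r i0)⁻¹ :=
      gamma_le hc hr0 hγbij hγinv i0 hVx0
    have h2 : γ (V x) ^ lam ≤ ((V x / c i0) ^ (r i0)⁻¹) ^ lam :=
      Real.rpow_le_rpow (hγnn hVx0) h1 hlam0.le
    rw [← Real.rpow_mul (by positivity)] at h2
    have h3 : (V x / c i0) ^ ee ≤ (CV / c i0 * ‖x‖) ^ ee := by
      rw [div_mul_eq_mul_div]
      exact Real.rpow_le_rpow (by positivity) (by gcongr) (by positivity)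
    have h4 : (CV / c i0 * ‖x‖) ^ ee = (CV / c i0) ^ ee * ‖x‖ ^ ee :=
      Real.mul_rpow (by positivity) (norm_nonneg x)
    have h5 : ‖x‖ ^ ee ≤ ‖x‖ * ‖x‖ := by
      rcases eq_or_lt_of_le (norm_nonneg x) with h0 | h0
      · rw [← h0, Real.zero_rpow heene, mul_zero]
      · have hle1 : ‖x‖ ≤ 1 := le_of_lt (lt_of_lt_of_le hx2 (min_le_left _ _))
        have : ‖x‖ ^ ee ≤ ‖x‖ ^ (2:ℝ) :=
          Real.rpow_le_rpow_of_exponent_ge h0 hle1 hee2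
        rwa [show (2:ℝ) = ((2:ℕ):ℝ) by norm_num, Real.rpow_natCast, pow_two] at this
    have hxεM : ‖x‖ ≤ ε / M := le_of_lt (lt_of_lt_of_le hx2 (min_le_right _ _))
    have hcore : γ (V x) ^ lam ≤ M * (‖x‖ * ‖x‖) := by
      have hMge : (CV / c i0) ^ ee ≤ M := by rw [hMdef]; linarith
      calc γ (V x) ^ lam ≤ (V x / c i0) ^ ((r i0)⁻¹ * lam) := h2
        _ = (V x / c i0) ^ ee := rfl
        _ ≤ (CV / c i0) ^ ee * ‖x‖ ^ ee := by rw [← h4]; exact h3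
        _ ≤ M * (‖x‖ * ‖x‖) := by
            apply mul_le_mul hMge h5 (Real.rpow_nonneg (norm_nonneg x) _)
              (le_trans (by positivity) hMge)
    have hnn : 0 ≤ γ (V x) ^ lam := Real.rpow_nonneg (hγnn hVx0) _
    rw [Real.norm_eq_abs, abs_of_nonneg hnn]
    calc γ (V x) ^ lam ≤ M * (‖x‖ * ‖x‖) := hcore
      _ ≤ M * (ε / M * ‖x‖) := by
          apply mul_le_mul_of_nonneg_left _ hM.le
          exact mul_le_mul_of_nonneg_right hxεM (norm_nonneg x)
      _ = ε * ‖x‖ := by field_simp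
  have hT0 : HasFDerivAt (fun y : EuclideanSpace ℝ (Fin d) => γ (V y) ^ lam) (0 : EuclideanSpace ℝ (Fin d) →L[ℝ] ℝ) 0 := by
    refine hasFDerivAt_iff_isLittleO_nhds_zero.2 ?_
    simpa [hV0, hγ0, Real.zero_rpow hlamne] using hlittle
  -- global differentiability
  have hdiff : Differentiable ℝ (fun y : EuclideanSpace ℝ (Fin d) => γ (V y) ^ lam) := by
    intro x
    rcases eq_or_ne x 0 with rfl | hx
    · exact hT0.differentiableAt
    · exact (hTd x hx).differentiableAt
  have hfd : ∀ x : EuclideanSpace ℝ (Fin d), x ≠ 0 →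
      fderiv ℝ (fun y : EuclideanSpace ℝ (Fin d) => γ (V y) ^ lam) x =
        mfun c r γ lam (V x) • fderiv ℝ V x := fun x hx => (hTd x hx).fderiv
  have hfd0 : fderiv ℝ (fun y : EuclideanSpace ℝ (Fin d) => γ (V y) ^ lam) 0 = 0 :=
    hT0.fderiv
  have hGcont : Continuous (fderiv ℝ V) := hV.continuous_fderiv one_ne_zero
  -- continuity of the full derivative
  have hcont : Continuous (fderiv ℝ (fun y : EuclideanSpace ℝ (Fin d) => γ (V y) ^ lam)) := by
    rw [continuous_iff_continuousAt]
    intro x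
    rcases eq_or_ne x 0 with rfl | hx
    · -- continuity at 0 via squeeze
      have hBcont : ContinuousAt
          (fun y : EuclideanSpace ℝ (Fin d) =>
            lam / (c i0 * r i0) * γ (V y) ^ (lam - r i0) * ‖fderiv ℝ V y‖) 0 := by
        have c1 : ContinuousAt (fun y : EuclideanSpace ℝ (Fin d) =>
            γ (V y) ^ (lam - r i0)) 0 :=
          hWcont.continuousAt.rpow_const (Or.inr hlam_sub.le)
        exact (continuousAt_const.mul c1).mul (continuous_norm.comp hGcont).continuousAt
      have hB0 : (fun y : EuclideanSpace ℝ (Fin d) =>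
          lam / (c i0 * r i0) * γ (V y) ^ (lam - r i0) * ‖fderiv ℝ V y‖) 0 = 0 := by
        simp [hV0, hγ0, Real.zero_rpow hlam_sub.ne']
      have hBt : Tendsto (fun y : EuclideanSpace ℝ (Fin d) =>
          lam / (c i0 * r i0) * γ (V y) ^ (lam - r i0) * ‖fderiv ℝ V y‖)
          (nhds 0) (nhds 0) := by
        have h' := hBcont.tendsto
        rw [hV0, hγ0, Real.zero_rpow hlam_sub.ne', mul_zero, zero_mul] at h'
        exact h'
      have hsq : ∀ y : EuclideanSpace ℝ (Fin d),
          ‖fderiv ℝ (fun z : EuclideanSpace ℝ (Fin d) => γ (V z) ^ lam) y‖ ≤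
            lam / (c i0 * r i0) * γ (V y) ^ (lam - r i0) * ‖fderiv ℝ V y‖ := by
        intro y
        rcases eq_or_ne y 0 with rfl | hy
        · rw [hfd0, norm_zero, hV0, hγ0, Real.zero_rpow hlam_sub.ne']
          simp
        · rw [hfd y hy, norm_smul, Real.norm_eq_abs,
            abs_of_nonneg (mfun_nonneg hn hc hr0 hlam0 (hγpos (hVpos y hy)))]
          exact mul_le_mul_of_nonneg_right
            (mfun_le hn hc hr0 hlam0 i0 (hγpos (hVpos y hy))) (norm_nonneg _)
      unfold ContinuousAt
      rw [hfd0]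
      exact squeeze_zero_norm hsq hBt
    · -- continuity away from 0
      have hwx : 0 < γ (V x) := hγpos (hVpos x hx)
      have hmc : ContinuousAt (fun y : EuclideanSpace ℝ (Fin d) =>
          mfun c r γ lam (V y)) x := by
        have c1 : ContinuousAt (fun y : EuclideanSpace ℝ (Fin d) =>
            γ (V y) ^ (lam - 1)) x :=
          hWcont.continuousAt.rpow_const (Or.inl hwx.ne')
        have c2 : ContinuousAt (fun y : EuclideanSpace ℝ (Fin d) =>
            (gD c r (γ (V y)))⁻¹) x := by
          have c2a : ContinuousAt ((gD c r) ∘ fun y : EuclideanSpace ℝ (Fin d) =>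
              γ (V y)) x :=
            ContinuousAt.comp (gD_continuousAt hwx.ne') hWcont.continuousAt
          exact c2a.inv₀ (gD_pos hn hc hr0 hwx).ne'
        exact (continuousAt_const.mul c1).mul c2
      have hev : fderiv ℝ (fun y : EuclideanSpace ℝ (Fin d) => γ (V y) ^ lam) =ᶠ[nhds x]
          fun y => mfun c r γ lam (V y) • fderiv ℝ V y := by
        filter_upwards [isOpen_compl_singleton.mem_nhds hx] with y hy
        exact hfd y hy
      exact (ContinuousAt.smul hmc hGcont.continuousAt).congr hev.symm
  have hcd1 : ContDiff ℝ 1 (fun y : EuclideanSpace ℝ (Fin d) => γ (V y) ^ lam) :=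
    contDiff_one_iff_fderiv.2 ⟨hdiff, hcont⟩
  -- monotone facts for the K∞ parts
  have hαl_nn : ∀ s : ℝ, 0 ≤ s → 0 ≤ αlow s := by
    intro s hs
    have := hαlm.monotoneOn Set.self_mem_Ici (Set.mem_Ici.2 hs) hs
    rwa [hαl0] at this
  have hαu_nn : ∀ s : ℝ, 0 ≤ s → 0 ≤ αup s := by
    intro s hs
    have := hαum.monotoneOn Set.self_mem_Ici (Set.mem_Ici.2 hs) hs
    rwa [hαu0] at this
  have hχ_nn : ∀ s : ℝ, 0 ≤ s → 0 ≤ χ s := by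
    intro s hs
    have := hχm.monotoneOn Set.self_mem_Ici (Set.mem_Ici.2 hs) hs
    rwa [hχ0] at this
  -- sandwich
  have hsand : ∀ x : EuclideanSpace ℝ (Fin d),
      γ (αlow ‖x‖) ^ lam ≤ γ (V x) ^ lam ∧ γ (V x) ^ lam ≤ γ (αup ‖x‖) ^ lam := by
    intro x
    have hl0 : 0 ≤ αlow ‖x‖ := hαl_nn _ (norm_nonneg x)
    have hu0 : 0 ≤ αup ‖x‖ := hαu_nn _ (norm_nonneg x)
    constructor
    · exact Real.rpow_le_rpow (hγnn hl0)
        (hγmono.monotoneOn (Set.mem_Ici.2 hl0) (Set.mem_Ici.2 (hVnn x))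
          (hsandwich x).1) hlam0.le
    · exact Real.rpow_le_rpow (hγnn (hVnn x))
        (hγmono.monotoneOn (Set.mem_Ici.2 (hVnn x)) (Set.mem_Ici.2 hu0)
          (hsandwich x).2) hlam0.le
  -- K∞ composition
  have hK : ∀ α : ℝ → ℝ, IsKInfty α → IsKInfty fun s => γ (α s) ^ lam := by
    intro α hα
    obtain ⟨hc', hm', h0', ht'⟩ := hα
    have hnn' : ∀ s : ℝ, s ∈ Set.Ici (0:ℝ) → 0 ≤ α s := by
      intro s hs
      have := hm'.monotoneOn Set.self_mem_Ici hs (Set.mem_Ici.1 hs)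
      rwa [h0'] at this
    refine ⟨?_, ?_, ?_, ?_⟩
    · exact (hγcont.comp hc' hnn').rpow_const fun s hs => Or.inr hlam0.le
    · intro s hs t ht hst
      exact Real.rpow_lt_rpow (hγnn (hnn' s hs))
        (hγmono (Set.mem_Ici.2 (hnn' s hs)) (Set.mem_Ici.2 (hnn' t ht))
          (hm' hs ht hst)) hlam0
    · show γ (α 0) ^ lam = 0
      rw [h0', hγ0, Real.zero_rpow hlamne]
    · exact (tendsto_rpow_atTop hlam0).comp (hγtend.comp ht')
  -- the new decay function
  obtain ⟨A, p', q', hA, hp'0, hp'1, hq'1, hkey⟩ :=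
    key_core hn hc hr0 i0 iN hle hge ha hb hp0 hp1 hq1 hlamgt hlam0
  refine ⟨lam, hlam1, hcd1, hsand, hK αlow ⟨hαlc, hαlm, hαl0, hαlt⟩,
    hK αup ⟨hαuc, hαum, hαu0, hαut⟩,
    ⟨fun σ => A * σ ^ p' + A * σ ^ q',
      ⟨A, A, p', q', hA, hA, hp'0, hp'1, hq'1, fun σ _ => rfl⟩, ?_⟩⟩
  intro x u hge'
  rcases eq_or_ne x 0 with rfl | hx
  · -- at the origin everything vanishes
    have hg0 : gradient (fun y : EuclideanSpace ℝ (Fin d) => γ (V y) ^ lam) 0 = 0 := by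
      have h1 := (hasFDerivAt_iff_hasGradientAt.1 hT0).gradient
      rw [h1, map_zero]
    rw [hg0, inner_zero_left, hV0, hγ0, Real.zero_rpow hlamne]
    simp [Real.zero_rpow hp'0.ne', Real.zero_rpow (by linarith : q' ≠ 0)]
  · have hVx := hVpos x hx
    have hγVx : 0 < γ (V x) := hγpos hVx
    have hχu : χ ‖u‖ ≤ V x := by
      by_contra hlt
      push_neg at hlt
      have hχnn : 0 ≤ χ ‖u‖ := hχ_nn _ (norm_nonneg u)
      have h1 : γ (V x) < γ (χ ‖u‖) :=
        hγmono (Set.mem_Ici.2 (hVnn x)) (Set.mem_Ici.2 hχnn) hlt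
      have h2 : γ (V x) ^ lam < γ (χ ‖u‖) ^ lam :=
        Real.rpow_lt_rpow (hγnn (hVnn x)) h1 hlam0
      exact absurd hge' (not_le.2 h2)
    have hIss := hiss x u hχu
    have hgrad : gradient (fun y : EuclideanSpace ℝ (Fin d) => γ (V y) ^ lam) x =
        mfun c r γ lam (V x) • gradient V x := by
      have h1 := (hasFDerivAt_iff_hasGradientAt.1 (hTd x hx)).gradient
      rw [h1, map_smul]
      rfl
    rw [hgrad, real_inner_smul_left]
    have hmnn : 0 ≤ mfun c r γ lam (V x) := mfun_nonneg hn hc hr0 hlam0 hγVx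
    have step1 : mfun c r γ lam (V x) * (inner ℝ (gradient V x) (f (x, u)) : ℝ) ≤
        mfun c r γ lam (V x) * (-Ψ (V x)) := mul_le_mul_of_nonneg_left hIss hmnn
    have hkey' := hkey (γ (V x)) hγVx
    rw [gP_gamma hc hγbij hγinv (hVnn x)] at hkey'
    rw [← hΨeq (V x) (hVnn x)] at hkey'
    have hmeq : (lam * γ (V x) ^ (lam - 1) * (gD c r (γ (V x)))⁻¹) * Ψ (V x) =
        mfun c r γ lam (V x) * Ψ (V x) := rfl
    rw [hmeq] at hkey'
    have step2 : mfun c r γ lam (V x) * (-Ψ (V x)) =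
        -(mfun c r γ lam (V x) * Ψ (V x)) := by ring
    show mfun c r γ lam (V x) * (inner ℝ (gradient V x) (f (x, u)) : ℝ) ≤
      -(A * (γ (V x) ^ lam) ^ p' + A * (γ (V x) ^ lam) ^ q')
    linarith [step1, hkey']
end

section
/- Let g(s) = Σ_{i=1}^n c_i·s^{r_i} with n ≥ 1, c_i > 0 for all i, and 0 < r_1 < … < r_n, and let γ : [0,∞) → [0,∞) be the inverse of g. Then for every λ > r_1, the function h(s) := γ(s)^λ is continuously differentiable on [0,∞), with h'(s) = λ·γ(s)^{λ−1} / (Σ_{i=1}^n r_i·c_i·γ(s)^{r_i−1}) for s > 0 and h'(0) = 0. -/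
open Set Filter Real Topology


/-- **Differentiability of powers of the inverse gain** (from the proof of
Lemma 6). Let `g(s) = Σ_{i=1}^n c_i s^{r_i}` (`n ≥ 1`, `c_i > 0`,
`0 < r_1 < … < r_n`) and let `γ : [0,∞) → [0,∞)` be the inverse of `g`. Then for
every `λ > r_1`, the function `h(s) = γ(s)^λ` is continuously differentiable on
`[0,∞)`, with `h'(s) = λ γ(s)^{λ−1} / (Σ_i r_i c_i γ(s)^{r_i−1})` for `s > 0`
and `h'(0) = 0`. -/
theorem stmt_6 (n : ℕ) (hn : 1 ≤ n) (c r : Fin n → ℝ)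
    (hc : ∀ i, 0 < c i) (hr0 : ∀ i, 0 < r i) (hrmono : StrictMono r)
    (γ : ℝ → ℝ)
    (hγcont : ContinuousOn γ (Set.Ici 0))
    (hγmono : StrictMonoOn γ (Set.Ici 0))
    (hγbij : Set.BijOn γ (Set.Ici 0) (Set.Ici 0))
    (hγinv : ∀ s : ℝ, 0 ≤ s → γ (∑ i, c i * s ^ r i) = s)
    (lam : ℝ) (hlam : r ⟨0, by omega⟩ < lam) :
    ∃ h' : ℝ → ℝ,
      ContinuousOn h' (Set.Ici 0) ∧
      (∀ s : ℝ, 0 ≤ s → HasDerivWithinAt (fun t => γ t ^ lam) (h' s) (Set.Ici 0) s) ∧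
      h' 0 = 0 ∧
      ∀ s : ℝ, 0 < s →
        h' s = lam * γ s ^ (lam - 1) / ∑ i, r i * c i * γ s ^ (r i - 1) := by
  have : Nonempty (Fin n) := ⟨⟨0, by omega⟩⟩
  set i0 : Fin n := ⟨0, by omega⟩ with hi0
  set r1 := r i0 with hr1def
  have hr1pos : 0 < r1 := hr0 i0
  have hlampos : 0 < lam := hr1pos.trans hlam
  have hlr : r1 < lam := hlam
  set D : ℝ → ℝ := fun s => ∑ i, r i * c i * γ s ^ (r i - 1) with hD
  set F : ℝ → ℝ := fun s => if 0 < s then lam * γ s ^ (lam - 1) / D s else 0 with hF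
  -- γ 0 = 0
  have hγ0 : γ 0 = 0 := by
    have h1 := hγinv 0 le_rfl
    have h2 : (∑ i : Fin n, c i * (0:ℝ) ^ r i) = 0 := by
      apply Finset.sum_eq_zero
      intro i _
      rw [Real.zero_rpow (hr0 i).ne', mul_zero]
    rwa [h2] at h1
  have hγnonneg : ∀ s : ℝ, 0 ≤ s → 0 ≤ γ s := fun s hs => hγbij.mapsTo hs
  have hγpos : ∀ s : ℝ, 0 < s → 0 < γ s := by
    intro s hs
    have := hγmono self_mem_Ici (le_of_lt hs : (0:ℝ) ≤ s) hs
    rwa [hγ0] at this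
  -- g (γ s) = s
  have hgγ : ∀ s : ℝ, 0 ≤ s → (∑ i, c i * γ s ^ r i) = s := by
    intro s hs
    have hmem : (0:ℝ) ≤ ∑ i, c i * γ s ^ r i := by
      apply Finset.sum_nonneg
      intro i _
      exact mul_nonneg (hc i).le (Real.rpow_nonneg (hγnonneg s hs) _)
    exact hγbij.injOn hmem hs (by rw [hγinv _ (hγnonneg s hs)])
  -- D positive
  have hDpos : ∀ s : ℝ, 0 < s → 0 < D s := by
    intro s hs
    apply Finset.sum_pos _ Finset.univ_nonempty
    intro i _
    exact mul_pos (mul_pos (hr0 i) (hc i)) (Real.rpow_pos_of_pos (hγpos s hs) _)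
  -- derivative of γ
  have hγderiv : ∀ s : ℝ, 0 < s → HasDerivAt γ ((D s)⁻¹) s := by
    intro s hs
    have ht : 0 < γ s := hγpos s hs
    have hgd : HasDerivAt (fun x => ∑ i, c i * x ^ r i)
        (∑ i, c i * (r i * γ s ^ (r i - 1))) (γ s) := by
      apply HasDerivAt.fun_sum
      intro i _
      exact (Real.hasDerivAt_rpow_const (Or.inl ht.ne')).const_mul (c i)
    have hsum : (∑ i, c i * (r i * γ s ^ (r i - 1))) = D s := by
      apply Finset.sum_congr rfl
      intro i _
      ring
    rw [hsum] at hgd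
    have hcontAt : ContinuousAt γ s :=
      (hγcont s hs.le).continuousAt (Ici_mem_nhds hs)
    have hev : ∀ᶠ y in 𝓝 s, (∑ i, c i * γ y ^ r i) = y := by
      filter_upwards [Ioi_mem_nhds hs] with y hy
      exact hgγ y hy.le
    exact HasDerivAt.of_local_left_inverse hcontAt hgd (hDpos s hs).ne' hev
  -- derivative of h at positive points
  have hderivpos : ∀ s : ℝ, 0 < s →
      HasDerivAt (fun t => γ t ^ lam) (F s) s := by
    intro s hs
    have hd := (hγderiv s hs).rpow_const (p := lam) (Or.inl (hγpos s hs).ne')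
    convert hd using 1
    simp only [hF, if_pos hs]
    rw [div_eq_mul_inv]
    ring
  -- the upper bound for γ
  have hγle : ∀ s : ℝ, 0 ≤ s → γ s ≤ (s / c i0) ^ r1⁻¹ := by
    intro s hs
    have h1 : c i0 * γ s ^ r1 ≤ s := by
      calc c i0 * γ s ^ r1 ≤ ∑ i, c i * γ s ^ r i :=
            Finset.single_le_sum (f := fun i => c i * γ s ^ r i)
              (fun i _ => mul_nonneg (hc i).le (Real.rpow_nonneg (hγnonneg s hs) _))
              (Finset.mem_univ i0)
        _ = s := hgγ s hs
    have h2 : γ s ^ r1 ≤ s / c i0 := (le_div_iff₀' (hc i0)).mpr h1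
    calc γ s = (γ s ^ r1) ^ r1⁻¹ := by
          rw [Real.rpow_rpow_inv (hγnonneg s hs) hr1pos.ne']
      _ ≤ (s / c i0) ^ r1⁻¹ :=
          Real.rpow_le_rpow (Real.rpow_nonneg (hγnonneg s hs) _) h2 (by positivity)
  have hF0 : F 0 = 0 := by
    simp only [hF]
    rw [if_neg (lt_irrefl (0:ℝ))]
  -- bound for F on Ici 0
  have hbound : ∀ s : ℝ, 0 ≤ s → F s ≤ (lam / (r1 * c i0)) * γ s ^ (lam - r1) := by
    intro s hs
    rcases eq_or_lt_of_le hs with h | h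
    · rw [← h, hF0, hγ0, Real.zero_rpow (by linarith : lam - r1 ≠ 0), mul_zero]
    · simp only [hF, if_pos h]
      have hgp := hγpos s h
      have hDge : r1 * c i0 * γ s ^ (r1 - 1) ≤ D s :=
        Finset.single_le_sum (f := fun i => r i * c i * γ s ^ (r i - 1))
          (fun i _ => mul_nonneg (mul_nonneg (hr0 i).le (hc i).le)
            (Real.rpow_nonneg hgp.le _)) (Finset.mem_univ i0)
      have hnum : 0 ≤ lam * γ s ^ (lam - 1) :=
        mul_nonneg hlampos.le (Real.rpow_nonneg hgp.le _)
      have hden : 0 < r1 * c i0 * γ s ^ (r1 - 1) :=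
        mul_pos (mul_pos hr1pos (hc i0)) (Real.rpow_pos_of_pos hgp _)
      have hq : γ s ^ (lam - 1) / γ s ^ (r1 - 1) = γ s ^ (lam - r1) := by
        rw [← Real.rpow_sub hgp]
        congr 1
        ring
      have hBne : γ s ^ (r1 - 1) ≠ 0 := (Real.rpow_pos_of_pos hgp _).ne'
      calc lam * γ s ^ (lam - 1) / D s
          ≤ lam * γ s ^ (lam - 1) / (r1 * c i0 * γ s ^ (r1 - 1)) :=
            div_le_div_of_nonneg_left hnum hden hDge
        _ = (lam / (r1 * c i0)) * (γ s ^ (lam - 1) / γ s ^ (r1 - 1)) := by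
            field_simp
        _ = (lam / (r1 * c i0)) * γ s ^ (lam - r1) := by rw [hq]
  have hFnonneg : ∀ s : ℝ, 0 ≤ F s := by
    intro s
    simp only [hF]
    split
    · next h =>
      exact div_nonneg (mul_nonneg hlampos.le
        (Real.rpow_nonneg (hγnonneg s h.le) _)) (hDpos s h).le
    · exact le_rfl
  -- derivative at 0
  have hderiv0 : HasDerivWithinAt (fun t => γ t ^ lam) 0 (Set.Ici 0) 0 := by
    rw [hasDerivWithinAt_iff_tendsto_slope]
    have hset : (Set.Ici (0:ℝ)) \ {0} = Set.Ioi 0 := Ici_sdiff_left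
    rw [hset]
    set p := r1⁻¹ * lam with hp
    have hp1 : 1 < p := by
      rw [hp]
      rw [show (1:ℝ) = r1⁻¹ * r1 by rw [inv_mul_cancel₀ hr1pos.ne']]
      exact mul_lt_mul_of_pos_left hlr (by positivity)
    -- upper bound function tends to 0
    have hU : Tendsto (fun s : ℝ => (s / c i0) ^ p / s) (𝓝[>] 0) (𝓝 0) := by
      have hEq : ∀ s ∈ Set.Ioi (0:ℝ), s ^ (p - 1) / c i0 ^ p = (s / c i0) ^ p / s := by
        intro s hs
        rw [Real.div_rpow (le_of_lt hs) (hc i0).le,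
          Real.rpow_sub hs, Real.rpow_one]
        field_simp
      have hT : Tendsto (fun s : ℝ => s ^ (p - 1) / c i0 ^ p) (𝓝[>] 0) (𝓝 0) := by
        have h1 : Tendsto (fun s : ℝ => s ^ (p - 1)) (𝓝 0) (𝓝 ((0:ℝ) ^ (p - 1))) :=
          (Real.continuousAt_rpow_const 0 (p - 1) (Or.inr (by linarith)))
        rw [Real.zero_rpow (by linarith : p - 1 ≠ 0)] at h1
        have := (h1.mono_left (nhdsWithin_le_nhds : 𝓝[>] (0:ℝ) ≤ 𝓝 0)).div_const (c i0 ^ p)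
        simpa using this
      exact hT.congr' (by filter_upwards [self_mem_nhdsWithin] with s hs using hEq s hs)
    apply tendsto_of_tendsto_of_tendsto_of_le_of_le' tendsto_const_nhds hU
    · filter_upwards [self_mem_nhdsWithin] with s hs
      rw [slope_def_field, hγ0, Real.zero_rpow hlampos.ne', sub_zero, sub_zero]
      exact div_nonneg (Real.rpow_nonneg (hγnonneg s (le_of_lt hs)) _) (le_of_lt hs)
    · filter_upwards [self_mem_nhdsWithin] with s hs
      rw [slope_def_field, hγ0, Real.zero_rpow hlampos.ne', sub_zero, sub_zero]
      have h1 : γ s ^ lam ≤ (s / c i0) ^ p := by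
        calc γ s ^ lam ≤ ((s / c i0) ^ r1⁻¹) ^ lam :=
              Real.rpow_le_rpow (hγnonneg s (le_of_lt hs)) (hγle s (le_of_lt hs)) hlampos.le
          _ = (s / c i0) ^ p := by
              rw [← Real.rpow_mul (div_nonneg (le_of_lt hs) (hc i0).le)]
      exact div_le_div_of_nonneg_right h1 (le_of_lt hs)
  -- continuity of F
  have hcont : ContinuousOn F (Set.Ici 0) := by
    intro s hs
    rcases eq_or_lt_of_le (Set.mem_Ici.mp hs) with h | h
    · rw [ContinuousWithinAt, ← h, hF0]
      have hγc0 : ContinuousWithinAt (fun t => γ t ^ (lam - r1)) (Set.Ici 0) 0 :=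
        (hγcont 0 self_mem_Ici).rpow_const (Or.inr (by linarith))
      have hT : Tendsto (fun t => (lam / (r1 * c i0)) * γ t ^ (lam - r1))
          (𝓝[Set.Ici 0] 0) (𝓝 ((lam / (r1 * c i0)) * γ 0 ^ (lam - r1))) :=
        hγc0.tendsto.const_mul _
      rw [hγ0, Real.zero_rpow (by linarith : lam - r1 ≠ 0), mul_zero] at hT
      apply tendsto_of_tendsto_of_tendsto_of_le_of_le' tendsto_const_nhds hT
      · exact Eventually.of_forall hFnonneg
      · filter_upwards [self_mem_nhdsWithin] with t ht using hbound t ht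
    · have hγa : ContinuousAt γ s := (hγcont s h.le).continuousAt (Ici_mem_nhds h)
      have hnum : ContinuousAt (fun t => lam * γ t ^ (lam - 1)) s :=
        (hγa.rpow_const (Or.inl (hγpos s h).ne')).const_mul lam
      have hden : ContinuousAt D s := by
        rw [hD]
        exact tendsto_finset_sum _ fun i _ =>
          (hγa.rpow_const (Or.inl (hγpos s h).ne')).const_mul (r i * c i)
      have hFc : ContinuousAt (fun t => lam * γ t ^ (lam - 1) / D t) s :=
        hnum.div hden (hDpos s h).ne'
      have hEq : (fun t => lam * γ t ^ (lam - 1) / D t) =ᶠ[𝓝 s] F := by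
        filter_upwards [Ioi_mem_nhds h] with t ht
        simp only [hF]
        rw [if_pos (Set.mem_Ioi.mp ht)]
      exact (hFc.congr hEq).continuousWithinAt
  refine ⟨F, hcont, ?_, hF0, fun s hs => by simp only [hF]; rw [if_pos hs]⟩
  intro s hs
  rcases eq_or_lt_of_le hs with h | h
  · rw [← h, hF0]
    exact hderiv0
  · exact (hderivpos s h).hasDerivWithinAt
end

section
/- Let γ̂₁, γ̂₂ : [0,∞) → [0,∞) be of class K∞ and satisfy the small-gain condition γ̂₁(γ̂₂(s)) < s for all s > 0. Then: (i) γ̂₂(γ̂₁(s)) < s for all s > 0; (ii) for all a > 0 and b ≥ 0, if γ̂₂(a) ≥ b then γ̂₁(b) < a; (iii) for all a ≥ 0 and b > 0, if γ̂₁(b) ≥ a then γ̂₂(a) < b. -/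
/-- **Small-gain implications** (used in cases 2 and 4 of the proof of Theorem 1).
If `γ̂₁, γ̂₂` are class-`K∞` and `γ̂₁(γ̂₂(s)) < s` for all `s > 0`, then
(i) `γ̂₂(γ̂₁(s)) < s` for all `s > 0`; (ii) for `a > 0`, `b ≥ 0`,
`γ̂₂(a) ≥ b → γ̂₁(b) < a`; (iii) for `a ≥ 0`, `b > 0`, `γ̂₁(b) ≥ a → γ̂₂(a) < b`. -/
theorem stmt_8 (γh₁ γh₂ : ℝ → ℝ)
    (hγh₁ : IsKInfty γh₁) (hγh₂ : IsKInfty γh₂)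
    (hsg : ∀ s : ℝ, 0 < s → γh₁ (γh₂ s) < s) :
    (∀ s : ℝ, 0 < s → γh₂ (γh₁ s) < s) ∧
    (∀ a b : ℝ, 0 < a → 0 ≤ b → b ≤ γh₂ a → γh₁ b < a) ∧
    (∀ a b : ℝ, 0 ≤ a → 0 < b → a ≤ γh₁ b → γh₂ a < b) := by
  obtain ⟨-, h1mono, h10, -⟩ := hγh₁
  obtain ⟨-, h2mono, h20, -⟩ := hγh₂
  have h2nn : ∀ a : ℝ, 0 ≤ a → 0 ≤ γh₂ a := by
    intro a ha
    rcases ha.lt_or_eq with h | h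
    · exact le_of_lt (h20 ▸ h2mono (le_refl (0:ℝ)) ha h)
    · rw [← h, h20]
  have hii : ∀ a b : ℝ, 0 < a → 0 ≤ b → b ≤ γh₂ a → γh₁ b < a := by
    intro a b ha hb hba
    calc γh₁ b ≤ γh₁ (γh₂ a) := h1mono.monotoneOn hb (h2nn a ha.le) hba
    _ < a := hsg a ha
  have hiii : ∀ a b : ℝ, 0 ≤ a → 0 < b → a ≤ γh₁ b → γh₂ a < b := by
    intro a b ha hb hab
    rcases ha.lt_or_eq with ha' | ha'
    · by_contra h
      push_neg at h
      exact absurd (hii a b ha' hb.le h) (not_lt.2 hab)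
    · rw [← ha', h20]; exact hb
  refine ⟨fun s hs => ?_, hii, hiii⟩
  have h1pos : 0 ≤ γh₁ s := by
    have := h1mono (le_refl (0:ℝ)) hs.le hs
    rw [h10] at this; exact this.le
  exact hiii (γh₁ s) s h1pos hs le_rfl
end

section
/- Let m₁ > 0, α₁ ∈ (0,1), β₁ > 1, ε₁ > 0, p, q > 0, and c₁ ∈ (0, m₁). Let x, y ∈ ℝ and let f : ℝ → ℝ satisfy 2x·f(x) ≤ −2m₁|x|^{2α₁} − 2m₁|x|^{2β₁}. If |x| > (ε₁ / (m₁ − c₁/2))·(|y|^p + |y|^q), then 2x·f(x) + 2ε₁·x·(⟦y⟧^p + ⟦y⟧^q) ≤ −c₁·(x²)^{α₁} − c₁·(x²)^{β₁}. -/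
/-- The signed power `⟦y⟧^a = |y|^a·sign(y)`. -/
noncomputable def sgnPow (y a : ℝ) : ℝ := |y| ^ a * Real.sign y

/-- **ISS gain implication for the `x`-subsystem** (proof of Theorem 2). If
`2xf(x) ≤ −2m₁|x|^{2α₁} − 2m₁|x|^{2β₁}` and
`|x| > (ε₁/(m₁ − c₁/2))(|y|^p + |y|^q)`, then
`2xf(x) + 2ε₁x(⟦y⟧^p + ⟦y⟧^q) ≤ −c₁(x²)^{α₁} − c₁(x²)^{β₁}`. -/
theorem stmt_12 (m₁ α₁ β₁ ε₁ p q c₁ : ℝ)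
    (hm₁ : 0 < m₁) (hα₁ : 0 < α₁ ∧ α₁ < 1) (hβ₁ : 1 < β₁)
    (hε₁ : 0 < ε₁) (hp : 0 < p) (hq : 0 < q) (hc₁ : 0 < c₁ ∧ c₁ < m₁)
    (x y : ℝ) (f : ℝ → ℝ)
    (hfb : 2 * x * f x ≤ -2 * m₁ * |x| ^ (2 * α₁) - 2 * m₁ * |x| ^ (2 * β₁))
    (hgain : ε₁ / (m₁ - c₁ / 2) * (|y| ^ p + |y| ^ q) < |x|) :
    2 * x * f x + 2 * ε₁ * x * (sgnPow y p + sgnPow y q) ≤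
      -c₁ * (x ^ 2) ^ α₁ - c₁ * (x ^ 2) ^ β₁ := by
  obtain ⟨hα0, hα1⟩ := hα₁
  obtain ⟨hc0, hcm⟩ := hc₁
  have hmc : 0 < m₁ - c₁ / 2 := by linarith
  have hyp : (0:ℝ) ≤ |y| ^ p := Real.rpow_nonneg (abs_nonneg y) p
  have hyq : (0:ℝ) ≤ |y| ^ q := Real.rpow_nonneg (abs_nonneg y) q
  have hx0 : 0 < |x| := lt_of_le_of_lt (by positivity) hgain
  -- rewrite (x^2)^α as |x|^(2α)
  have hA : (x ^ 2 : ℝ) ^ α₁ = |x| ^ (2 * α₁) := by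
    rw [← sq_abs, ← Real.rpow_natCast |x| 2, ← Real.rpow_mul (abs_nonneg x)]
    norm_num
  have hB : (x ^ 2 : ℝ) ^ β₁ = |x| ^ (2 * β₁) := by
    rw [← sq_abs, ← Real.rpow_natCast |x| 2, ← Real.rpow_mul (abs_nonneg x)]
    norm_num
  rw [hA, hB]
  -- |x|^2 ≤ |x|^(2α₁) + |x|^(2β₁)
  have hx2 : |x| ^ (2:ℝ) ≤ |x| ^ (2 * α₁) + |x| ^ (2 * β₁) := by
    rcases le_or_gt (|x|) 1 with h1 | h1
    · have := Real.rpow_le_rpow_of_exponent_ge hx0 h1 (by linarith : 2 * α₁ ≤ 2)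
      have hb : (0:ℝ) ≤ |x| ^ (2 * β₁) := Real.rpow_nonneg (abs_nonneg x) _
      linarith
    · have := Real.rpow_le_rpow_of_exponent_le (le_of_lt h1) (by linarith : (2:ℝ) ≤ 2 * β₁)
      have ha : (0:ℝ) ≤ |x| ^ (2 * α₁) := Real.rpow_nonneg (abs_nonneg x) _
      linarith
  have hx2' : |x| ^ (2:ℝ) = |x| * |x| := by
    rw [show (2:ℝ) = ((2:ℕ):ℝ) by norm_num, Real.rpow_natCast]; ring
  -- bound the sign
  have hsgn : |Real.sign y| ≤ 1 := by
    rcases lt_trichotomy y 0 with h | h | h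
    · rw [Real.sign_of_neg h]; norm_num
    · rw [h, Real.sign_zero]; norm_num
    · rw [Real.sign_of_pos h]; norm_num
  have hbound : x * (sgnPow y p + sgnPow y q) ≤ |x| * (|y| ^ p + |y| ^ q) := by
    calc x * (sgnPow y p + sgnPow y q) ≤ |x * (sgnPow y p + sgnPow y q)| := le_abs_self _
    _ = |x| * |sgnPow y p + sgnPow y q| := abs_mul _ _
    _ ≤ |x| * (|sgnPow y p| + |sgnPow y q|) := by
        gcongr; exact abs_add_le _ _
    _ ≤ |x| * (|y| ^ p + |y| ^ q) := by
        gcongr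
        · rw [sgnPow, abs_mul, abs_of_nonneg hyp]
          nlinarith
        · rw [sgnPow, abs_mul, abs_of_nonneg hyq]
          nlinarith
  -- gain inequality
  have hgain' : ε₁ * (|y| ^ p + |y| ^ q) < (m₁ - c₁ / 2) * |x| := by
    rw [div_mul_eq_mul_div, div_lt_iff₀ hmc] at hgain
    linarith [hgain]
  have hcross : 2 * ε₁ * x * (sgnPow y p + sgnPow y q) ≤ (2 * m₁ - c₁) * (|x| * |x|) := by
    have h1 : 2 * ε₁ * x * (sgnPow y p + sgnPow y q) ≤ 2 * ε₁ * (|x| * (|y| ^ p + |y| ^ q)) := by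
      have := mul_le_mul_of_nonneg_left hbound (by positivity : (0:ℝ) ≤ 2 * ε₁)
      linarith [this]
    have h2 : ε₁ * (|y| ^ p + |y| ^ q) * |x| ≤ (m₁ - c₁ / 2) * |x| * |x| :=
      mul_le_mul_of_nonneg_right (le_of_lt hgain') (abs_nonneg x)
    nlinarith
  have hfinal : (2 * m₁ - c₁) * (|x| * |x|) ≤ (2 * m₁ - c₁) * (|x| ^ (2 * α₁) + |x| ^ (2 * β₁)) := by
    rw [← hx2']
    exact mul_le_mul_of_nonneg_left hx2 (by linarith)
  linarith
end

section
/- Let m₁, m₂ > 0, c₁ ∈ (0, m₁), c₂ ∈ (0, m₂), ε₁, ε₂ > 0, p, q, r > 0, α₂ ∈ (0,1), β₂ > 1, and suppose p·r ∈ [α₂, β₂] and q·r ∈ [α₂, β₂]. Let L_r = max(1, 2^{r−1}) and suppose ε₁^r·ε₂ < (m₁ − c₁/2)^r·m₂^{1/2}·(m₂ − c₂)^{1/2} / (2^r·L_r^{1/2}). Then for all s > 0, (ε₁ / (m₁ − c₁/2))²·(s^{p/2} + s^{q/2})² < (m₂·(m₂ − c₂) / (L_r·ε₂²))^{1/r}·(s^{α₂/r}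 + s^{β₂/r}). -/
open Real

set_option maxHeartbeats 1000000 in
/-- **Small-gain comparison inequality `γ₂⁻¹(s) > γ₁(s)`** (proof of Theorem 2).
Under `pr, qr ∈ [α₂, β₂]` and
`ε₁^r ε₂ < (m₁ − c₁/2)^r m₂^{1/2} (m₂ − c₂)^{1/2} / (2^r L_r^{1/2})`, one has,
for all `s > 0`,
`(ε₁/(m₁ − c₁/2))² (s^{p/2} + s^{q/2})² < (m₂(m₂ − c₂)/(L_r ε₂²))^{1/r} (s^{α₂/r} + s^{β₂/r})`. -/
theorem stmt_13 (m₁ m₂ c₁ c₂ ε₁ ε₂ p q r α₂ β₂ : ℝ)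
    (hm₁ : 0 < m₁) (hm₂ : 0 < m₂)
    (hc₁ : 0 < c₁ ∧ c₁ < m₁) (hc₂ : 0 < c₂ ∧ c₂ < m₂)
    (hε₁ : 0 < ε₁) (hε₂ : 0 < ε₂)
    (hp : 0 < p) (hq : 0 < q) (hr : 0 < r)
    (hα₂ : 0 < α₂ ∧ α₂ < 1) (hβ₂ : 1 < β₂)
    (hpr : α₂ ≤ p * r ∧ p * r ≤ β₂) (hqr : α₂ ≤ q * r ∧ q * r ≤ β₂)
    (hsg : ε₁ ^ r * ε₂ <
      (m₁ - c₁ / 2) ^ r * m₂ ^ (1/2 : ℝ) * (m₂ - c₂) ^ (1/2 : ℝ) /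
        (2 ^ r * (max 1 (2 ^ (r - 1) : ℝ)) ^ (1/2 : ℝ))) :
    ∀ s : ℝ, 0 < s →
      (ε₁ / (m₁ - c₁ / 2)) ^ 2 * (s ^ (p / 2) + s ^ (q / 2)) ^ 2 <
        (m₂ * (m₂ - c₂) / ((max 1 (2 ^ (r - 1) : ℝ)) * ε₂ ^ 2)) ^ (1 / r) *
          (s ^ (α₂ / r) + s ^ (β₂ / r)) := by
  obtain ⟨hc₁0, hc₁m⟩ := hc₁
  obtain ⟨hc₂0, hc₂m⟩ := hc₂
  intro s hs
  have hM : 0 < m₁ - c₁ / 2 := by linarith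
  set M := m₁ - c₁ / 2 with hMdef
  set L : ℝ := max 1 (2 ^ (r - 1) : ℝ) with hLdef
  have hL : (0:ℝ) < L := lt_of_lt_of_le one_pos (le_max_left _ _)
  have hm₂c : 0 < m₂ - c₂ := by linarith
  have hE : 0 < ε₁ / M := div_pos hε₁ hM
  set E := ε₁ / M with hEdef
  have hr0 : r ≠ 0 := hr.ne'
  have hD : (0:ℝ) < 2 ^ r * L ^ (1/2 : ℝ) := by positivity
  -- Step 1: rearranged small-gain hypothesis
  have h1 : E ^ r * ε₂ * (2 ^ r * L ^ (1/2 : ℝ)) <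
      m₂ ^ (1/2:ℝ) * (m₂ - c₂) ^ (1/2:ℝ) := by
    have h2 : ε₁ ^ r * ε₂ * (2 ^ r * L ^ (1/2:ℝ)) <
        M ^ r * m₂ ^ (1/2:ℝ) * (m₂ - c₂) ^ (1/2:ℝ) := by
      rw [← lt_div_iff₀ hD]; exact hsg
    have hMr : (0:ℝ) < M ^ r := rpow_pos_of_pos hM r
    have hEr : E ^ r = ε₁ ^ r / M ^ r := div_rpow hε₁.le hM.le r
    rw [hEr, div_mul_eq_mul_div, div_mul_eq_mul_div, div_lt_iff₀ hMr]
    calc ε₁ ^ r * ε₂ * (2 ^ r * L ^ (1/2:ℝ))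
        < M ^ r * m₂ ^ (1/2:ℝ) * (m₂ - c₂) ^ (1/2:ℝ) := h2
      _ = m₂ ^ (1/2:ℝ) * (m₂ - c₂) ^ (1/2:ℝ) * M ^ r := by ring
  -- Step 2: raise to the power 2/r
  have h2r : (0:ℝ) < 2 / r := by positivity
  have h3 := rpow_lt_rpow (by positivity) h1 h2r
  have lhs_eq : (E ^ r * ε₂ * (2 ^ r * L ^ (1/2 : ℝ))) ^ (2/r : ℝ)
      = 4 * E ^ 2 * (L ^ (1/r:ℝ) * ε₂ ^ (2/r : ℝ)) := by
    rw [mul_rpow (by positivity) (by positivity),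
        mul_rpow (by positivity) (by positivity),
        mul_rpow (by positivity) (by positivity),
        ← rpow_mul hE.le, ← rpow_mul (by norm_num : (0:ℝ) ≤ 2), ← rpow_mul hL.le,
        show r * (2/r) = 2 by field_simp,
        show (1/2 : ℝ) * (2/r) = 1/r by field_simp,
        show ((2:ℝ) ^ (2:ℝ)) = 4 by
          rw [show (2:ℝ) = ((2:ℕ):ℝ) by norm_num, rpow_natCast]; norm_num,
        show E ^ (2:ℝ) = E ^ 2 by
          rw [show (2:ℝ) = ((2:ℕ):ℝ) by norm_num, rpow_natCast]]
    ring
  have rhs_eq : (m₂ ^ (1/2:ℝ) * (m₂ - c₂) ^ (1/2:ℝ)) ^ (2/r : ℝ)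
      = m₂ ^ (1/r:ℝ) * (m₂ - c₂) ^ (1/r:ℝ) := by
    rw [mul_rpow (by positivity) (by positivity), ← rpow_mul hm₂.le,
        ← rpow_mul hm₂c.le, show (1/2 : ℝ) * (2/r) = 1/r by field_simp]
  rw [lhs_eq, rhs_eq] at h3
  -- Step 3: constant comparison
  have hC : 4 * E ^ 2 < (m₂ * (m₂ - c₂) / (L * ε₂ ^ 2)) ^ (1/r : ℝ) := by
    have hden : (0:ℝ) < L ^ (1/r:ℝ) * ε₂ ^ (2/r:ℝ) := by positivity
    rw [div_rpow (by positivity) (by positivity), mul_rpow hm₂.le hm₂c.le,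
        mul_rpow hL.le (by positivity), ← rpow_natCast ε₂ 2, ← rpow_mul hε₂.le,
        show ((2:ℕ):ℝ) * (1/r) = 2/r by push_cast; ring, lt_div_iff₀ hden]
    exact h3
  -- Step 4: exponent bounding lemma
  have hbound : ∀ a : ℝ, α₂/r ≤ a → a ≤ β₂/r →
      s ^ a ≤ s ^ (α₂/r) + s ^ (β₂/r) := by
    intro a hA hB
    rcases le_total s 1 with h1' | h1'
    · have h := rpow_le_rpow_of_exponent_ge hs h1' hA
      have h0 : 0 ≤ s ^ (β₂/r) := (rpow_pos_of_pos hs _).le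
      linarith
    · have h := rpow_le_rpow_of_exponent_le h1' hB
      have h0 : 0 ≤ s ^ (α₂/r) := (rpow_pos_of_pos hs _).le
      linarith
  have hpb : s ^ p ≤ s ^ (α₂/r) + s ^ (β₂/r) := by
    refine hbound p ?_ ?_
    · rw [div_le_iff₀ hr]; exact hpr.1
    · rw [le_div_iff₀ hr]; exact hpr.2
  have hqb : s ^ q ≤ s ^ (α₂/r) + s ^ (β₂/r) := by
    refine hbound q ?_ ?_
    · rw [div_le_iff₀ hr]; exact hqr.1
    · rw [le_div_iff₀ hr]; exact hqr.2
  -- Step 5: square inequality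
  have ha : s ^ (p/2) * s ^ (p/2) = s ^ p := by
    rw [← rpow_add hs]; ring_nf
  have hb : s ^ (q/2) * s ^ (q/2) = s ^ q := by
    rw [← rpow_add hs]; ring_nf
  have hsq : (s ^ (p/2) + s ^ (q/2)) ^ 2 ≤ 2 * (s ^ p + s ^ q) := by
    nlinarith [sq_nonneg (s ^ (p/2) - s ^ (q/2)), ha, hb]
  -- Final chain
  have hT : 0 < s ^ (α₂/r) + s ^ (β₂/r) := by positivity
  have hE2 : 0 < E ^ 2 := by positivity
  calc E ^ 2 * (s ^ (p/2) + s ^ (q/2)) ^ 2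
      ≤ E ^ 2 * (2 * (s ^ p + s ^ q)) := by
        exact mul_le_mul_of_nonneg_left hsq hE2.le
    _ ≤ E ^ 2 * (2 * (2 * (s ^ (α₂/r) + s ^ (β₂/r)))) := by
        have : s ^ p + s ^ q ≤ 2 * (s ^ (α₂/r) + s ^ (β₂/r)) := by linarith
        nlinarith [hE2]
    _ = (4 * E ^ 2) * (s ^ (α₂/r) + s ^ (β₂/r)) := by ring
    _ < (m₂ * (m₂ - c₂) / (L * ε₂ ^ 2)) ^ (1/r : ℝ) * (s ^ (α₂/r) + s ^ (β₂/r)) := by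
        exact mul_lt_mul_of_pos_right hC hT
end

section
/- Let P ∈ ℝ^{n×m}, let Q₁ ∈ ℝ^{n×n} and Q₂ ∈ ℝ^{m×m} be symmetric positive definite, and let ε ∈ (0, λ_min(Q₂)), where λ_min(Q₂) is the smallest eigenvalue of Q₂. Let σ_max(P) denote the largest singular value of P (the operator norm of P) and λ_max(Q₁), λ_max(Q₂) the largest eigenvalues of Q₁, Q₂. Then for all x̃ ∈ ℝⁿ and ũ ∈ ℝᵐ with |ũ| ≥ (σ_max(P)·λ_max(Q₁)/(λ_min(Q₂) − ε))·|x̃|, the following three inequalities hold: (a) ũᵀPᵀQ₁x̃ + ũᵀQ₂ũ ≥ ε|ũ|²; (b) |PᵀQ₁x̃ + Q₂ũ| ≤ 2λ_max(Q₂)·|ũ|; (c) |PᵀQ₁x̃ + Q₂ũ| ≥ ε|ũ|. -/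
/-- Matrix–vector multiplication as a map between Euclidean spaces. -/
noncomputable def mulVecE {n m : ℕ} (P : Matrix (Fin n) (Fin m) ℝ)
    (u : EuclideanSpace ℝ (Fin m)) : EuclideanSpace ℝ (Fin n) :=
  (WithLp.equiv 2 (Fin n → ℝ)).symm (P.mulVec u)

section aux
variable {k : ℕ} {A : Matrix (Fin k) (Fin k) ℝ}

lemma mulVecE_eq_toEuclideanLin {n m : ℕ} (P : Matrix (Fin n) (Fin m) ℝ)
    (u : EuclideanSpace ℝ (Fin m)) : mulVecE P u = Matrix.toEuclideanLin P u := rfl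

lemma repr_mulVecE (hA : A.IsHermitian) (v : EuclideanSpace ℝ (Fin k)) (j : Fin k) :
    hA.eigenvectorBasis.repr (mulVecE A v) j =
      hA.eigenvalues j * hA.eigenvectorBasis.repr v j := by
  have hv := hA.eigenvectorBasis.sum_repr v
  have key : ∀ i, mulVecE A (hA.eigenvectorBasis i) =
      hA.eigenvalues i • hA.eigenvectorBasis i := by
    intro i
    have := hA.mulVec_eigenvectorBasis i
    apply (WithLp.equiv 2 (Fin k → ℝ)).injective
    ext l
    have := congrFun this l
    simpa [mulVecE] using this
  conv_lhs => rw [← hv]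
  rw [mulVecE_eq_toEuclideanLin, map_sum, map_sum]
  simp only [map_smul, ← mulVecE_eq_toEuclideanLin, key, smul_smul]
  rw [WithLp.ofLp_sum, Finset.sum_apply]
  simp [OrthonormalBasis.repr_self, EuclideanSpace.single_apply, Finset.sum_ite_eq', mul_comm]


lemma norm_sq_repr (hA : A.IsHermitian) (v : EuclideanSpace ℝ (Fin k)) :
    ‖v‖ ^ 2 = ∑ j, hA.eigenvectorBasis.repr v j ^ 2 := by
  rw [← real_inner_self_eq_norm_sq, ← hA.eigenvectorBasis.repr.inner_map_map v v,
    PiLp.inner_apply]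
  simp [sq]

lemma inner_mulVecE_eq (hA : A.IsHermitian) (v : EuclideanSpace ℝ (Fin k)) :
    (inner ℝ v (mulVecE A v) : ℝ) =
      ∑ j, hA.eigenvalues j * hA.eigenvectorBasis.repr v j ^ 2 := by
  rw [← hA.eigenvectorBasis.repr.inner_map_map v (mulVecE A v), PiLp.inner_apply]
  simp only [RCLike.inner_apply, conj_trivial, repr_mulVecE hA]
  congr 1; ext j; ring

lemma norm_mulVecE_sq (hA : A.IsHermitian) (v : EuclideanSpace ℝ (Fin k)) :
    ‖mulVecE A v‖ ^ 2 = ∑ j, hA.eigenvalues j ^ 2 * hA.eigenvectorBasis.repr v j ^ 2 := by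
  rw [norm_sq_repr hA]
  congr 1; ext j; rw [repr_mulVecE hA]; ring

lemma quad_lower (hA : A.PosDef) (v : EuclideanSpace ℝ (Fin k)) :
    (⨅ j, hA.isHermitian.eigenvalues j) * ‖v‖ ^ 2 ≤ (inner ℝ v (mulVecE A v) : ℝ) := by
  rw [inner_mulVecE_eq hA.isHermitian, norm_sq_repr hA.isHermitian, Finset.mul_sum]
  refine Finset.sum_le_sum fun j _ => ?_
  exact mul_le_mul_of_nonneg_right
    (ciInf_le (Set.Finite.bddBelow (Set.finite_range _)) j) (sq_nonneg _)

lemma eigen_le_sup (hA : A.PosDef) (j : Fin k) :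
    hA.isHermitian.eigenvalues j ≤ ⨆ i, hA.isHermitian.eigenvalues i :=
  le_ciSup (Set.Finite.bddAbove (Set.finite_range _)) j

lemma sup_eigen_nonneg (hA : A.PosDef) : 0 ≤ ⨆ i, hA.isHermitian.eigenvalues i := by
  cases isEmpty_or_nonempty (Fin k) with
  | inl h => simp [Real.iSup_of_isEmpty]
  | inr h =>
      exact le_trans (hA.eigenvalues_pos (Classical.arbitrary (Fin k))).le
        (eigen_le_sup hA (Classical.arbitrary (Fin k)))

lemma norm_mulVecE_le (hA : A.PosDef) (v : EuclideanSpace ℝ (Fin k)) :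
    ‖mulVecE A v‖ ≤ (⨆ i, hA.isHermitian.eigenvalues i) * ‖v‖ := by
  have h2 : 0 ≤ (⨆ i, hA.isHermitian.eigenvalues i) * ‖v‖ :=
    mul_nonneg (sup_eigen_nonneg hA) (norm_nonneg _)
  rw [← pow_le_pow_iff_left₀ (norm_nonneg _) h2 two_ne_zero, mul_pow,
    norm_mulVecE_sq hA.isHermitian, norm_sq_repr hA.isHermitian, Finset.mul_sum]
  refine Finset.sum_le_sum fun j _ => ?_
  refine mul_le_mul_of_nonneg_right ?_ (sq_nonneg _)
  exact pow_le_pow_left₀ (hA.eigenvalues_pos j).le (eigen_le_sup hA j) 2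

lemma norm_mulVecE_transpose_le {n m : ℕ} (P : Matrix (Fin n) (Fin m) ℝ)
    (w : EuclideanSpace ℝ (Fin n)) :
    ‖mulVecE P.transpose w‖ ≤
      ‖LinearMap.toContinuousLinearMap (Matrix.toEuclideanLin P)‖ * ‖w‖ := by
  have h1 : Matrix.toEuclideanLin P.transpose =
      LinearMap.adjoint (Matrix.toEuclideanLin P) := by
    rw [← Matrix.conjTranspose_eq_transpose_of_trivial,
      Matrix.toEuclideanLin_conjTranspose_eq_adjoint]
  have h2 : LinearMap.toContinuousLinearMap (Matrix.toEuclideanLin P.transpose) =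
      ContinuousLinearMap.adjoint (LinearMap.toContinuousLinearMap
        (Matrix.toEuclideanLin P)) := by
    rw [h1, LinearMap.adjoint_toContinuousLinearMap]
  have h3 : mulVecE P.transpose w = LinearMap.toContinuousLinearMap
      (Matrix.toEuclideanLin P.transpose) w := rfl
  rw [h3]
  calc ‖LinearMap.toContinuousLinearMap (Matrix.toEuclideanLin P.transpose) w‖
      ≤ ‖LinearMap.toContinuousLinearMap (Matrix.toEuclideanLin P.transpose)‖ * ‖w‖ :=
        ContinuousLinearMap.le_opNorm _ w
    _ = _ := by rw [h2, ContinuousLinearMap.adjoint.norm_map]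

end aux

/-- **Inequalities (14a)–(14c)** (proof of Theorem 3). Let `Q₁, Q₂` be symmetric
positive definite and `ε ∈ (0, λ_min(Q₂))`. Then for all `x̃, ũ` with
`|ũ| ≥ (σ_max(P) λ_max(Q₁)/(λ_min(Q₂) − ε))|x̃|`:
(a) `ũᵀPᵀQ₁x̃ + ũᵀQ₂ũ ≥ ε|ũ|²`;
(b) `|PᵀQ₁x̃ + Q₂ũ| ≤ 2λ_max(Q₂)|ũ|`;
(c) `|PᵀQ₁x̃ + Q₂ũ| ≥ ε|ũ|`. -/
theorem stmt_17 (n m : ℕ) (P : Matrix (Fin n) (Fin m) ℝ)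
    (Q₁ : Matrix (Fin n) (Fin n) ℝ) (Q₂ : Matrix (Fin m) (Fin m) ℝ)
    (hQ₁ : Q₁.PosDef) (hQ₂ : Q₂.PosDef)
    (ε : ℝ) (hε : 0 < ε ∧ ε < ⨅ i, hQ₂.isHermitian.eigenvalues i)
    (x : EuclideanSpace ℝ (Fin n)) (u : EuclideanSpace ℝ (Fin m))
    (hgain : ‖LinearMap.toContinuousLinearMap (Matrix.toEuclideanLin P)‖ *
        (⨆ i, hQ₁.isHermitian.eigenvalues i) /
        ((⨅ i, hQ₂.isHermitian.eigenvalues i) - ε) * ‖x‖ ≤ ‖u‖) :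
    ε * ‖u‖ ^ 2 ≤ (inner ℝ u (mulVecE P.transpose (mulVecE Q₁ x)) : ℝ) +
      (inner ℝ u (mulVecE Q₂ u) : ℝ) ∧
    ‖mulVecE P.transpose (mulVecE Q₁ x) + mulVecE Q₂ u‖ ≤
      2 * (⨆ i, hQ₂.isHermitian.eigenvalues i) * ‖u‖ ∧
    ε * ‖u‖ ≤ ‖mulVecE P.transpose (mulVecE Q₁ x) + mulVecE Q₂ u‖ := by
  set σ := ‖LinearMap.toContinuousLinearMap (Matrix.toEuclideanLin P)‖ with hσ
  set a := ⨆ i, hQ₁.isHermitian.eigenvalues i with ha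
  set c := ⨅ i, hQ₂.isHermitian.eigenvalues i with hc
  set b := ⨆ i, hQ₂.isHermitian.eigenvalues i with hb
  set w₁ := mulVecE P.transpose (mulVecE Q₁ x) with hw₁
  set w₂ := mulVecE Q₂ u with hw₂
  obtain ⟨hε0, hεc⟩ := hε
  have hcε : 0 < c - ε := by linarith
  haveI hm : Nonempty (Fin m) := by
    by_contra h
    rw [not_nonempty_iff] at h
    rw [hc, Real.iInf_of_isEmpty] at hεc
    linarith
  have hgain' : σ * a * ‖x‖ ≤ (c - ε) * ‖u‖ := by
    rw [div_mul_eq_mul_div, div_le_iff₀ hcε] at hgain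
    linarith
  have hPQx : ‖w₁‖ ≤ (c - ε) * ‖u‖ := by
    calc ‖w₁‖ ≤ σ * ‖mulVecE Q₁ x‖ := norm_mulVecE_transpose_le P _
      _ ≤ σ * (a * ‖x‖) := by
          exact mul_le_mul_of_nonneg_left (norm_mulVecE_le hQ₁ x) (norm_nonneg _)
      _ = σ * a * ‖x‖ := by ring
      _ ≤ (c - ε) * ‖u‖ := hgain'
  have hcs : |(inner ℝ u w₁ : ℝ)| ≤ ‖u‖ * ‖w₁‖ := abs_real_inner_le_norm u w₁
  have h4 : ‖u‖ * ‖w₁‖ ≤ (c - ε) * ‖u‖ ^ 2 := by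
    have := mul_le_mul_of_nonneg_left hPQx (norm_nonneg u)
    nlinarith [norm_nonneg u]
  have hlow : c * ‖u‖ ^ 2 ≤ (inner ℝ u w₂ : ℝ) := quad_lower hQ₂ u
  have hA : ε * ‖u‖ ^ 2 ≤ (inner ℝ u w₁ : ℝ) + (inner ℝ u w₂ : ℝ) := by
    have h5 : -((c - ε) * ‖u‖ ^ 2) ≤ (inner ℝ u w₁ : ℝ) := by
      have := neg_abs_le (inner ℝ u w₁ : ℝ)
      linarith
    linarith
  have hcb : c ≤ b := le_trans
    (ciInf_le (Set.Finite.bddBelow (Set.finite_range _)) (Classical.arbitrary (Fin m)))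
    (le_ciSup (Set.Finite.bddAbove (Set.finite_range _)) (Classical.arbitrary (Fin m)))
  have hw₂n : ‖w₂‖ ≤ b * ‖u‖ := norm_mulVecE_le hQ₂ u
  have hB : ‖w₁ + w₂‖ ≤ 2 * b * ‖u‖ := by
    calc ‖w₁ + w₂‖ ≤ ‖w₁‖ + ‖w₂‖ := norm_add_le _ _
      _ ≤ (c - ε) * ‖u‖ + b * ‖u‖ := add_le_add hPQx hw₂n
      _ ≤ 2 * b * ‖u‖ := by nlinarith [norm_nonneg u]
  refine ⟨hA, hB, ?_⟩
  have hsum : ε * ‖u‖ ^ 2 ≤ (inner ℝ u (w₁ + w₂) : ℝ) := by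
    rw [inner_add_right]; exact hA
  have hcs2 : (inner ℝ u (w₁ + w₂) : ℝ) ≤ ‖u‖ * ‖w₁ + w₂‖ := real_inner_le_norm _ _
  rcases eq_or_lt_of_le (norm_nonneg u) with h0 | h0
  · rw [← h0, mul_zero]; exact norm_nonneg _
  · have : ε * ‖u‖ * ‖u‖ ≤ ‖w₁ + w₂‖ * ‖u‖ := by nlinarith
    exact le_of_mul_le_mul_right this h0
end

section
/- Let ε > 0, M > 0, ξ₁ ∈ (0,1), ξ₂ < 0, and let ũ, F ∈ ℝᵐ with F ≠ 0. If ũᵀF ≥ ε|ũ|², |F| ≤ 2M|ũ|, and |F| ≥ ε|ũ|, then −2·ũᵀF·(|F|^{−ξ₁} + |F|^{−ξ₂}) ≤ −(2ε/(2M)^{ξ₁})·|ũ|^{2−ξ₁} − 2ε^{1−ξ₂}·|ũ|^{2−ξ₂}. Equivalently, with W = |ũ|²: the left-hand side is at most −(2ε/(2M)^{ξ₁})·W^{1−ξ₁/2} − 2ε^{1−ξ₂}·W^{1−ξ₂/2}. -/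
/-- **Pointwise decrease estimate for the controller Lyapunov function**
(proof of Theorem 3). If `ũᵀF ≥ ε|ũ|²`, `|F| ≤ 2M|ũ|`, and `|F| ≥ ε|ũ|` with
`F ≠ 0`, `ε, M > 0`, `ξ₁ ∈ (0,1)`, `ξ₂ < 0`, then
`−2 ũᵀF (|F|^{−ξ₁} + |F|^{−ξ₂}) ≤ −(2ε/(2M)^{ξ₁})|ũ|^{2−ξ₁} − 2ε^{1−ξ₂}|ũ|^{2−ξ₂}`. -/
theorem stmt_18 (m : ℕ) (ε M ξ₁ ξ₂ : ℝ)
    (hε : 0 < ε) (hM : 0 < M) (hξ₁ : 0 < ξ₁ ∧ ξ₁ < 1) (hξ₂ : ξ₂ < 0)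
    (u F : EuclideanSpace ℝ (Fin m)) (hF : F ≠ 0)
    (h1 : ε * ‖u‖ ^ 2 ≤ (inner ℝ u F : ℝ))
    (h2 : ‖F‖ ≤ 2 * M * ‖u‖)
    (h3 : ε * ‖u‖ ≤ ‖F‖) :
    -2 * (inner ℝ u F : ℝ) * (‖F‖ ^ (-ξ₁) + ‖F‖ ^ (-ξ₂)) ≤
      -(2 * ε / (2 * M) ^ ξ₁) * ‖u‖ ^ (2 - ξ₁) -
        2 * ε ^ (1 - ξ₂) * ‖u‖ ^ (2 - ξ₂) := by
  obtain ⟨hξ₁0, hξ₁1⟩ := hξ₁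
  have hFpos : 0 < ‖F‖ := norm_pos_iff.mpr hF
  have hupos : 0 < ‖u‖ := by nlinarith [norm_nonneg u]
  have hIpos : (0:ℝ) < ε * ‖u‖ ^ 2 := by positivity
  have t1 : (2 * M * ‖u‖) ^ (-ξ₁) ≤ ‖F‖ ^ (-ξ₁) :=
    Real.rpow_le_rpow_of_nonpos hFpos h2 (by linarith)
  have t2 : (ε * ‖u‖) ^ (-ξ₂) ≤ ‖F‖ ^ (-ξ₂) :=
    Real.rpow_le_rpow (by positivity) h3 (by linarith)
  have e1 : (2 * M * ‖u‖) ^ (-ξ₁) = (2 * M) ^ (-ξ₁) * ‖u‖ ^ (-ξ₁) :=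
    Real.mul_rpow (by positivity) (le_of_lt hupos)
  have e2 : (ε * ‖u‖) ^ (-ξ₂) = ε ^ (-ξ₂) * ‖u‖ ^ (-ξ₂) :=
    Real.mul_rpow (le_of_lt hε) (le_of_lt hupos)
  have eu1 : ‖u‖ ^ (2 - ξ₁) = ‖u‖ ^ 2 * ‖u‖ ^ (-ξ₁) := by
    rw [show (2 - ξ₁ : ℝ) = 2 + (-ξ₁) by ring, Real.rpow_add hupos,
      Real.rpow_two]
  have eu2 : ‖u‖ ^ (2 - ξ₂) = ‖u‖ ^ 2 * ‖u‖ ^ (-ξ₂) := by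
    rw [show (2 - ξ₂ : ℝ) = 2 + (-ξ₂) by ring, Real.rpow_add hupos,
      Real.rpow_two]
  have eε : ε ^ (1 - ξ₂) = ε * ε ^ (-ξ₂) := by
    rw [show (1 - ξ₂ : ℝ) = 1 + (-ξ₂) by ring, Real.rpow_add hε, Real.rpow_one]
  have eM : (2 * M) ^ (-ξ₁) = 1 / (2 * M) ^ ξ₁ := by
    rw [Real.rpow_neg (by positivity), one_div]
  have hMp : (0:ℝ) < (2 * M) ^ ξ₁ := Real.rpow_pos_of_pos (by positivity) _
  have hA : (0:ℝ) < ‖F‖ ^ (-ξ₁) := Real.rpow_pos_of_pos hFpos _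
  have hB : (0:ℝ) < ‖F‖ ^ (-ξ₂) := Real.rpow_pos_of_pos hFpos _
  have step1 : -2 * (inner ℝ u F : ℝ) * (‖F‖ ^ (-ξ₁) + ‖F‖ ^ (-ξ₂)) ≤
      -2 * (ε * ‖u‖ ^ 2) * (‖F‖ ^ (-ξ₁) + ‖F‖ ^ (-ξ₂)) := by
    nlinarith [h1, hA, hB]
  have step2 : -2 * (ε * ‖u‖ ^ 2) * (‖F‖ ^ (-ξ₁) + ‖F‖ ^ (-ξ₂)) ≤
      -(2 * ε / (2 * M) ^ ξ₁) * ‖u‖ ^ (2 - ξ₁) -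
        2 * ε ^ (1 - ξ₂) * ‖u‖ ^ (2 - ξ₂) := by
    rw [eu1, eu2, eε]
    rw [e1, eM] at t1
    rw [e2] at t2
    have h₁ : -2 * (ε * ‖u‖ ^ 2) * ‖F‖ ^ (-ξ₁) ≤
        -(2 * ε / (2 * M) ^ ξ₁) * (‖u‖ ^ 2 * ‖u‖ ^ (-ξ₁)) := by
      have h := mul_le_mul_of_nonneg_left t1 (le_of_lt hIpos)
      calc -2 * (ε * ‖u‖ ^ 2) * ‖F‖ ^ (-ξ₁)
          ≤ -2 * (ε * ‖u‖ ^ 2 * (1 / (2 * M) ^ ξ₁ * ‖u‖ ^ (-ξ₁))) := by linarith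
        _ = -(2 * ε / (2 * M) ^ ξ₁) * (‖u‖ ^ 2 * ‖u‖ ^ (-ξ₁)) := by ring
    have h₂ : -2 * (ε * ‖u‖ ^ 2) * ‖F‖ ^ (-ξ₂) ≤
        -(2 * (ε * ε ^ (-ξ₂))) * (‖u‖ ^ 2 * ‖u‖ ^ (-ξ₂)) := by
      have h := mul_le_mul_of_nonneg_left t2 (le_of_lt hIpos)
      calc -2 * (ε * ‖u‖ ^ 2) * ‖F‖ ^ (-ξ₂)
          ≤ -2 * (ε * ‖u‖ ^ 2 * (ε ^ (-ξ₂) * ‖u‖ ^ (-ξ₂))) := by linarith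
        _ = -(2 * (ε * ε ^ (-ξ₂))) * (‖u‖ ^ 2 * ‖u‖ ^ (-ξ₂)) := by ring
    linarith [h₁, h₂]
  linarith [step1, step2]
end
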